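/- arXiv:1407.7263 — 8 statements merged into one kernel-verified Lean document; each statement's English description precedes it below -/
import Mathlib

section
/- Let G be a finite simple graph of girth at least 5 and let C be a dominating set of G. Let X = {x ∈ V(G) \ C : |N(x) ∩ C| = 1}. Then C is a locating-dominating set of G if and only if there exists an injective function f : X → C such that f(x) ∈ C ∩ N(x) for all x ∈ X. -/
/-- A set of vertices is *dominating* if every vertex is equal or adjacent to a
member of the set. -/
def SimpleGraph.DominatingSet {V : Type*} (G : SimpleGraph V) (D : Set V) : Prop :=
  ∀ v : V, ∃ d ∈ D, d = v ∨ G.Adj d v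

/-- A set `C` is *locating-dominating* if it is dominating and every two distinct
vertices outside `C` have different neighbourhoods within `C`. -/
def SimpleGraph.LocatingDominatingSet {V : Type*} (G : SimpleGraph V) (C : Set V) : Prop :=
  G.DominatingSet C ∧
    ∀ u ∉ C, ∀ v ∉ C, u ≠ v → G.neighborSet u ∩ C ≠ G.neighborSet v ∩ C


lemma four_cycle_false {V : Type*} (G : SimpleGraph V) (hg : 5 ≤ G.egirth) {u v a b : V}
    (huv : u ≠ v) (hab : a ≠ b) (h1 : G.Adj u a) (h2 : G.Adj a v) (h3 : G.Adj v b)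
    (h4 : G.Adj b u) : False := by
  set w : G.Walk u u := .cons h1 (.cons h2 (.cons h3 (.cons h4 .nil))) with hw
  have hc : w.IsCycle := by
    simp [hw, SimpleGraph.Walk.isCycle_def, SimpleGraph.Walk.isTrail_def, Sym2.eq_iff]
    refine ⟨⟨?_, ?_, ?_⟩, ?_⟩ <;>
    aesop (add simp [h1.ne, h2.ne, h3.ne, h4.ne, h1.ne', h2.ne', h3.ne', h4.ne'])
  have := SimpleGraph.le_egirth.mp hg u w hc
  simp [hw] at this
  exact (by norm_num : ¬(5:ℕ∞) ≤ 4) this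


/-- Lemma 1: in a graph of girth at least 5, a dominating set `C` is
locating-dominating iff there is an injective choice function assigning to each
vertex dominated exactly once a neighbour in `C`. -/
theorem locatingDominating_iff_injective_choice
    {V : Type*} [Fintype V] (G : SimpleGraph V) (hg : 5 ≤ G.egirth)
    (C : Set V) (hC : G.DominatingSet C)
    (X : Set V) (hX : X = {x | x ∉ C ∧ (G.neighborSet x ∩ C).ncard = 1}) :
    G.LocatingDominatingSet C ↔
      ∃ f : V → V, Set.InjOn f X ∧ ∀ x ∈ X, f x ∈ C ∩ G.neighborSet x := by
  classical
  constructor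
  · rintro ⟨-, hloc⟩
    have hex : ∀ x ∈ X, ∃ a, G.neighborSet x ∩ C = {a} := by
      intro x hx
      rw [hX] at hx
      exact Set.ncard_eq_one.mp hx.2
    refine ⟨fun x => if h : ∃ a, G.neighborSet x ∩ C = {a} then h.choose else x, ?_, ?_⟩
    · intro x hx y hy hfx
      by_contra hne
      have hx' := hex x hx
      have hy' := hex y hy
      simp only [dif_pos hx', dif_pos hy'] at hfx
      have hxC : x ∉ C := by rw [hX] at hx; exact hx.1
      have hyC : y ∉ C := by rw [hX] at hy; exact hy.1
      exact hloc x hxC y hyC hne (by rw [hx'.choose_spec, hy'.choose_spec, hfx])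
    · intro x hx
      have hx' := hex x hx
      simp only [dif_pos hx']
      have : hx'.choose ∈ G.neighborSet x ∩ C :=
        (Set.eq_singleton_iff_unique_mem.mp hx'.choose_spec).1
      exact ⟨this.2, this.1⟩
  · rintro ⟨f, hinj, hf⟩
    refine ⟨hC, fun u huC v hvC huv heq => ?_⟩
    -- there is a neighbour of u in C
    obtain ⟨d, hdC, hd⟩ := hC u
    have hdu : G.Adj d u := by
      rcases hd with rfl | h
      · exact absurd hdC huC
      · exact h
    have hdS : d ∈ G.neighborSet u ∩ C := ⟨hdu.symm, hdC⟩
    by_cases hb : ∃ b ∈ G.neighborSet u ∩ C, b ≠ d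
    · obtain ⟨b, ⟨hbu, hbC⟩, hbd⟩ := hb
      have hdv : d ∈ G.neighborSet v ∩ C := heq ▸ hdS
      have hbv : b ∈ G.neighborSet v ∩ C := heq ▸ ⟨hbu, hbC⟩
      exact four_cycle_false G hg huv hbd.symm hdu.symm hdv.1.symm hbv.1 (SimpleGraph.Adj.symm hbu)
    · push_neg at hb
      have hS : G.neighborSet u ∩ C = {d} :=
        Set.eq_singleton_iff_unique_mem.mpr ⟨hdS, fun b hbS => hb b hbS⟩
      have hSv : G.neighborSet v ∩ C = {d} := heq ▸ hS
      have hxu : u ∈ X := by rw [hX]; exact ⟨huC, by rw [hS]; simp⟩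
      have hxv : v ∈ X := by rw [hX]; exact ⟨hvC, by rw [hSv]; simp⟩
      have h1 : f u = d := by
        have := hf u hxu
        have : f u ∈ G.neighborSet u ∩ C := ⟨this.2, this.1⟩
        rwa [hS, Set.mem_singleton_iff] at this
      have h2 : f v = d := by
        have := hf v hxv
        have : f v ∈ G.neighborSet v ∩ C := ⟨this.2, this.1⟩
        rwa [hSv, Set.mem_singleton_iff] at this
      exact huv (hinj hxu hxv (h1.trans h2.symm))
end

section
/- Let G be a finite simple identifiable graph of girth at least 5, let C be a dominating set of G, and let C≥3 be the set of vertices of C that belong to a connected component of the induced subgraph G[C] having at least 3 vertices. Then C is an identifying code of G if and only if both of the following hold: (i) no connected component of G[C] has exactly 2 vertices; and (ii) with X = {x ∈ V(G) \ C : |N(x) ∩ C| = 1}, there exists an injective function f : X → C such that f(x) ∈ C≥3 ∩ N(x) for all x ∈ X. -/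
/-- A graph is *identifiable* if no two distinct vertices have the same closed
neighbourhood. -/
def SimpleGraph.Identifiable {V : Type*} (G : SimpleGraph V) : Prop :=
  ∀ u v : V, insert u (G.neighborSet u) = insert v (G.neighborSet v) → u = v

/-- A set `C` is an *identifying code* if it is dominating and every two distinct
vertices have different closed neighbourhoods within `C`. -/
def SimpleGraph.IdentifyingCode {V : Type*} (G : SimpleGraph V) (C : Set V) : Prop :=
  G.DominatingSet C ∧
    ∀ u v : V, u ≠ v →
      insert u (G.neighborSet u) ∩ C ≠ insert v (G.neighborSet v) ∩ C

open SimpleGraph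

private lemma no_triangle' {V : Type*} (G : SimpleGraph V) (hg : 5 ≤ G.egirth)
    {a b c : V} (hab : G.Adj a b) (hbc : G.Adj b c) (hca : G.Adj c a) : False := by
  have h1 := hab.ne; have h2 := hbc.ne; have h3 := hca.ne
  have h1' := hab.ne'; have h2' := hbc.ne'; have h3' := hca.ne'
  have hcyc : (Walk.cons hab (Walk.cons hbc (Walk.cons hca Walk.nil))).IsCycle := by
    rw [Walk.isCycle_def]
    refine ⟨⟨?_⟩, by simp, ?_⟩
    · simp only [Walk.edges_cons, Walk.edges_nil, List.pairwise_cons, List.Pairwise.nil,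
        List.mem_cons, List.not_mem_nil]
      simp [Sym2.eq_iff]
      tauto
    · simp [Walk.support]
      tauto
  have := SimpleGraph.le_egirth.mp hg a _ hcyc
  simp only [Walk.length_cons, Walk.length_nil] at this
  norm_num at this

private lemma no_square' {V : Type*} (G : SimpleGraph V) (hg : 5 ≤ G.egirth)
    {a b c d : V} (hab : G.Adj a b) (hbc : G.Adj b c) (hcd : G.Adj c d) (hda : G.Adj d a)
    (hac : a ≠ c) (hbd : b ≠ d) : False := by
  have h1 := hab.ne; have h2 := hbc.ne; have h3 := hcd.ne; have h4 := hda.ne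
  have h1' := hab.ne'; have h2' := hbc.ne'; have h3' := hcd.ne'; have h4' := hda.ne'
  have hcyc :
      (Walk.cons hab (Walk.cons hbc (Walk.cons hcd (Walk.cons hda Walk.nil)))).IsCycle := by
    rw [Walk.isCycle_def]
    refine ⟨⟨?_⟩, by simp, ?_⟩
    · simp only [Walk.edges_cons, Walk.edges_nil, List.pairwise_cons, List.Pairwise.nil,
        List.mem_cons, List.not_mem_nil]
      simp [Sym2.eq_iff]
      tauto
    · simp [Walk.support]
      tauto
  have := SimpleGraph.le_egirth.mp hg a _ hcyc
  simp only [Walk.length_cons, Walk.length_nil] at this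
  norm_num at this

private lemma exists_adj_of_mem_supp_ne' {W : Type*} (H : SimpleGraph W) {v w : W}
    (h : w ∈ (H.connectedComponentMk v).supp) (hne : w ≠ v) :
    ∃ x, H.Adj v x ∧ x ∈ (H.connectedComponentMk v).supp := by
  rw [ConnectedComponent.mem_supp_iff] at h
  obtain ⟨p⟩ := (ConnectedComponent.exact h).symm
  cases p with
  | nil => exact (hne rfl).elim
  | cons ha q =>
      refine ⟨_, ha, ?_⟩
      rw [ConnectedComponent.mem_supp_iff]
      exact ConnectedComponent.sound ha.symm.reachable

private lemma supp_eq_pair' {W : Type*} (H : SimpleGraph W) {u v : W} (huv : H.Adj u v)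
    (hu : ∀ x, H.Adj u x → x = v) (hv : ∀ x, H.Adj v x → x = u) :
    (H.connectedComponentMk u).supp = {u, v} := by
  have key : ∀ (s w : W) (p : H.Walk s w), (s = u ∨ s = v) → (w = u ∨ w = v) := by
    intro s w p
    induction p with
    | nil => exact id
    | @cons s x w h p ih =>
        rintro (rfl | rfl)
        · exact ih (Or.inr (hu _ h))
        · exact ih (Or.inl (hv _ h))
  ext w
  simp only [ConnectedComponent.mem_supp_iff, Set.mem_insert_iff, Set.mem_singleton_iff]
  constructor
  · intro h
    obtain ⟨p⟩ := (ConnectedComponent.exact h).symm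
    exact key _ _ p (Or.inl rfl)
  · rintro (rfl | rfl)
    · rfl
    · exact ConnectedComponent.sound huv.symm.reachable

/-- Lemma 2: characterization of identifying codes in graphs of girth at least 5. -/
theorem identifyingCode_iff_no_K2_component_and_injective_choice
    {V : Type*} [Fintype V] (G : SimpleGraph V) (hid : G.Identifiable)
    (hg : 5 ≤ G.egirth) (C : Set V) (hC : G.DominatingSet C)
    (Cge3 : Set V)
    (hCge3 : Cge3 = {v : V | ∃ h : v ∈ C,
      3 ≤ ((G.induce C).connectedComponentMk ⟨v, h⟩).supp.ncard})
    (X : Set V) (hX : X = {x | x ∉ C ∧ (G.neighborSet x ∩ C).ncard = 1}) :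
    G.IdentifyingCode C ↔
      ((∀ c : (G.induce C).ConnectedComponent, c.supp.ncard ≠ 2) ∧
        ∃ f : V → V, Set.InjOn f X ∧ ∀ x ∈ X, f x ∈ Cge3 ∩ G.neighborSet x) := by
  subst hCge3 hX
  classical
  have hcode : ∀ u w : V, w ∈ insert u (G.neighborSet u) ∩ C ↔
      (w = u ∨ G.Adj u w) ∧ w ∈ C := by
    intro u w
    simp [Set.mem_insert_iff]
  have htri : ∀ {a b c : V}, G.Adj a b → G.Adj b c → G.Adj c a → False :=
    fun h1 h2 h3 => no_triangle' G hg h1 h2 h3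
  have hsq : ∀ {a b c d : V}, G.Adj a b → G.Adj b c → G.Adj c d → G.Adj d a →
      a ≠ c → b ≠ d → False :=
    fun h1 h2 h3 h4 h5 h6 => no_square' G hg h1 h2 h3 h4 h5 h6
  constructor
  · rintro ⟨hdom, hsep⟩
    have hK2 : ∀ c : (G.induce C).ConnectedComponent, c.supp.ncard ≠ 2 := by
      intro comp hcard
      obtain ⟨a, rfl⟩ := comp.exists_rep
      have hcard' : ((G.induce C).connectedComponentMk a).supp.ncard = 2 := hcard
      have ha : a ∈ ((G.induce C).connectedComponentMk a).supp := rfl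
      obtain ⟨b, hbmem, hba⟩ := Set.exists_ne_of_one_lt_ncard
        (s := ((G.induce C).connectedComponentMk a).supp) (by omega : 1 < ((G.induce C).connectedComponentMk a).supp.ncard) a
      obtain ⟨x, hax, hxmem⟩ := exists_adj_of_mem_supp_ne' _ hbmem hba
      have hxa : x ≠ a := hax.ne'
      have hsupp : ((G.induce C).connectedComponentMk a).supp = {a, x} := by
        refine (Set.eq_of_subset_of_ncard_le ?_ ?_ (Set.toFinite _)).symm
        · intro y hy
          rcases hy with rfl | hy
          · exact ha
          · exact Set.mem_singleton_iff.mp hy ▸ hxmem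
        · rw [hcard', Set.ncard_pair (Ne.symm hxa)]
      have hadjux : G.Adj (↑a) (↑x) := by simpa using hax
      have hmemsupp : ∀ (w : V) (hwC : w ∈ C), G.Adj (↑a) w →
          (⟨w, hwC⟩ : ↥C) ∈ ((G.induce C).connectedComponentMk a).supp := by
        intro w hwC hadj
        rw [ConnectedComponent.mem_supp_iff]
        exact ConnectedComponent.sound (SimpleGraph.Adj.reachable
          (by simpa using hadj.symm))
      have hmemsuppx : ∀ (w : V) (hwC : w ∈ C), G.Adj (↑x) w →
          (⟨w, hwC⟩ : ↥C) ∈ ((G.induce C).connectedComponentMk a).supp := by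
        intro w hwC hadj
        rw [ConnectedComponent.mem_supp_iff]
        have h1 : (G.induce C).connectedComponentMk ⟨w, hwC⟩ =
            (G.induce C).connectedComponentMk x :=
          ConnectedComponent.sound (SimpleGraph.Adj.reachable (by simpa using hadj.symm))
        have h2 : (G.induce C).connectedComponentMk x =
            (G.induce C).connectedComponentMk a :=
          ConnectedComponent.sound hax.symm.reachable
        exact h1.trans h2
      have hcA : insert (↑a) (G.neighborSet ↑a) ∩ C = {(↑a : V), ↑x} := by
        ext w
        rw [hcode]
        constructor
        · rintro ⟨(rfl | hadj), hwC⟩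
          · exact Or.inl rfl
          · have := hmemsupp w hwC hadj
            rw [hsupp] at this
            rcases this with h | h
            · exact Or.inl (congrArg Subtype.val h)
            · exact Or.inr (congrArg Subtype.val h)
        · rintro (rfl | rfl)
          · exact ⟨Or.inl rfl, a.2⟩
          · exact ⟨Or.inr hadjux, x.2⟩
      have hcX : insert (↑x) (G.neighborSet ↑x) ∩ C = {(↑a : V), ↑x} := by
        ext w
        rw [hcode]
        constructor
        · rintro ⟨(rfl | hadj), hwC⟩
          · exact Or.inr rfl
          · have := hmemsuppx w hwC hadj
            rw [hsupp] at this
            rcases this with h | h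
            · exact Or.inl (congrArg Subtype.val h)
            · exact Or.inr (congrArg Subtype.val h)
        · rintro (rfl | rfl)
          · exact ⟨Or.inr hadjux.symm, a.2⟩
          · exact ⟨Or.inl rfl, x.2⟩
      exact hsep (↑a) (↑x) (fun h => hxa (Subtype.ext h).symm) (hcA.trans hcX.symm)
    obtain ⟨f, hfspec⟩ : ∃ f : V → V, ∀ x, (G.neighborSet x ∩ C).ncard = 1 →
        G.neighborSet x ∩ C = {f x} := by
      choose g hg' using fun x (h : (G.neighborSet x ∩ C).ncard = 1) =>
        Set.ncard_eq_one.mp h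
      refine ⟨fun x => if h : (G.neighborSet x ∩ C).ncard = 1 then g x h else x,
        fun x h1 => ?_⟩
      beta_reduce
      rw [dif_pos h1]
      exact hg' x h1
    refine ⟨hK2, f, ?_, ?_⟩
    · intro x hx y hy hxy
      by_contra hne
      refine hsep x y hne ?_
      rw [Set.insert_inter_of_notMem hx.1, Set.insert_inter_of_notMem hy.1,
        hfspec x hx.2, hfspec y hy.2, hxy]
    · intro x hx
      have hfx := hfspec x hx.2
      have hcmem : f x ∈ G.neighborSet x ∩ C := by rw [hfx]; exact rfl
      obtain ⟨hadj, hcC⟩ := hcmem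
      refine ⟨⟨hcC, ?_⟩, hadj⟩
      have hne : x ≠ f x := fun h => hx.1 (h ▸ hcC)
      have hcodes := hsep x (f x) hne
      have hcx : insert x (G.neighborSet x) ∩ C = {f x} := by
        rw [Set.insert_inter_of_notMem hx.1, hfx]
      have hd : ∃ d, d ∈ insert (f x) (G.neighborSet (f x)) ∩ C ∧ d ≠ f x := by
        by_contra hno
        push_neg at hno
        refine hcodes (hcx.trans ?_)
        refine (Set.eq_singleton_iff_unique_mem.mpr ⟨?_, hno⟩).symm
        exact (hcode (f x) (f x)).mpr ⟨Or.inl rfl, hcC⟩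
      obtain ⟨d, hdmem, hdc⟩ := hd
      rw [hcode] at hdmem
      obtain ⟨hd1, hdC⟩ := hdmem
      have hadjcd : G.Adj (f x) d := hd1.resolve_left hdc
      have hadj' : (G.induce C).Adj ⟨f x, hcC⟩ ⟨d, hdC⟩ := by simpa using hadjcd
      have hdsupp : (⟨d, hdC⟩ : ↥C) ∈
          ((G.induce C).connectedComponentMk ⟨f x, hcC⟩).supp := by
        rw [ConnectedComponent.mem_supp_iff]
        exact ConnectedComponent.sound hadj'.symm.reachable
      have hcsupp : (⟨f x, hcC⟩ : ↥C) ∈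
          ((G.induce C).connectedComponentMk ⟨f x, hcC⟩).supp := rfl
      have h2 : 1 < ((G.induce C).connectedComponentMk ⟨f x, hcC⟩).supp.ncard := by
        rw [Set.one_lt_ncard (Set.toFinite _)]
        exact ⟨_, hcsupp, _, hdsupp, fun h => hdc (congrArg Subtype.val h).symm⟩
      have h3 := hK2 ((G.induce C).connectedComponentMk ⟨f x, hcC⟩)
      omega
  · rintro ⟨hK2, f, hinj, hf⟩
    have hC3sub : {v : V | ∃ h : v ∈ C,
        3 ≤ ((G.induce C).connectedComponentMk ⟨v, h⟩).supp.ncard} ⊆ C := by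
      rintro z ⟨h, _⟩
      exact h
    refine ⟨hC, ?_⟩
    intro u v huv heq
    have caseB : ∀ u v : V, u ≠ v →
        insert u (G.neighborSet u) ∩ C = insert v (G.neighborSet v) ∩ C →
        u ∈ C → v ∉ C → False := by
      intro u v huv heq hu hv
      have humem : u ∈ insert v (G.neighborSet v) ∩ C := by
        rw [← heq]
        exact (hcode u u).mpr ⟨Or.inl rfl, hu⟩
      rw [hcode] at humem
      have hadjvu : G.Adj v u := humem.1.resolve_left huv
      have hcodeu : insert u (G.neighborSet u) ∩ C = {u} := by
        refine Set.eq_singleton_iff_unique_mem.mpr ⟨(hcode u u).mpr ⟨Or.inl rfl, hu⟩, ?_⟩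
        intro w hw
        have hw2 : w ∈ insert v (G.neighborSet v) ∩ C := by rw [← heq]; exact hw
        rw [hcode] at hw hw2
        obtain ⟨hw1, hwC⟩ := hw
        obtain ⟨hw3, -⟩ := hw2
        rcases hw1 with rfl | hadj
        · rfl
        · rcases hw3 with rfl | hadj2
          · exact (hv hwC).elim
          · exact (htri hadjvu hadj hadj2.symm).elim
      have hNv : G.neighborSet v ∩ C = {u} := by
        rw [← Set.insert_inter_of_notMem hv, ← heq, hcodeu]
      have hvX : v ∈ {x | x ∉ C ∧ (G.neighborSet x ∩ C).ncard = 1} :=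
        ⟨hv, by rw [hNv]; exact Set.ncard_singleton u⟩
      obtain ⟨hfC3, hfadj⟩ := hf v hvX
      have hfvC : f v ∈ C := hC3sub hfC3
      have hfvu : f v = u := by
        have : f v ∈ G.neighborSet v ∩ C := ⟨hfadj, hfvC⟩
        rw [hNv] at this
        exact this
      rw [hfvu] at hfC3
      obtain ⟨hu', h3⟩ := hfC3
      obtain ⟨b, hbmem, hba⟩ := Set.exists_ne_of_one_lt_ncard
        (s := ((G.induce C).connectedComponentMk ⟨u, hu'⟩).supp) (by omega) (⟨u, hu'⟩ : ↥C)
      obtain ⟨x, hax, -⟩ := exists_adj_of_mem_supp_ne' _ hbmem hba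
      have hadjux : G.Adj u ↑x := by simpa using hax
      have : (↑x : V) ∈ insert u (G.neighborSet u) ∩ C :=
        (hcode u ↑x).mpr ⟨Or.inr hadjux, x.2⟩
      rw [hcodeu] at this
      exact hadjux.ne (this.symm)
    by_cases hu : u ∈ C <;> by_cases hv : v ∈ C
    · -- both in C
      have humem : u ∈ insert v (G.neighborSet v) ∩ C := by
        rw [← heq]; exact (hcode u u).mpr ⟨Or.inl rfl, hu⟩
      rw [hcode] at humem
      have hadjvu : G.Adj v u := humem.1.resolve_left huv
      have hadjuv : G.Adj u v := hadjvu.symm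
      have honlyu : ∀ w, G.Adj u w → w ∈ C → w = v := by
        intro w hw hwC
        have hw2 : w ∈ insert v (G.neighborSet v) ∩ C := by
          rw [← heq]; exact (hcode u w).mpr ⟨Or.inr hw, hwC⟩
        rw [hcode] at hw2
        rcases hw2.1 with rfl | hadj2
        · rfl
        · exact (htri hadjuv hadj2 hw.symm).elim
      have honlyv : ∀ w, G.Adj v w → w ∈ C → w = u := by
        intro w hw hwC
        have hw2 : w ∈ insert u (G.neighborSet u) ∩ C := by
          rw [heq]; exact (hcode v w).mpr ⟨Or.inr hw, hwC⟩
        rw [hcode] at hw2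
        rcases hw2.1 with rfl | hadj2
        · rfl
        · exact (htri hadjvu hadj2 hw.symm).elim
      have hsupp := supp_eq_pair' (G.induce C) (u := ⟨u, hu⟩) (v := ⟨v, hv⟩)
        (by simpa using hadjuv)
        (fun x hx => Subtype.ext (honlyu ↑x (by simpa using hx) x.2))
        (fun x hx => Subtype.ext (honlyv ↑x (by simpa using hx) x.2))
      refine hK2 ((G.induce C).connectedComponentMk ⟨u, hu⟩) ?_
      rw [hsupp]
      exact Set.ncard_pair (fun h => huv (congrArg Subtype.val h))
    · exact caseB u v huv heq hu hv
    · exact caseB v u huv.symm heq.symm hv hu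
    · -- both outside C
      obtain ⟨d, hdC, hd⟩ := hC u
      have hdu : G.Adj u d := by
        rcases hd with rfl | h
        · exact (hu hdC).elim
        · exact h.symm
      have hdmemu : d ∈ insert u (G.neighborSet u) ∩ C := (hcode u d).mpr ⟨Or.inr hdu, hdC⟩
      have hdmemv : d ∈ insert v (G.neighborSet v) ∩ C := by rw [← heq]; exact hdmemu
      rw [hcode] at hdmemv
      have hdv : G.Adj v d := hdmemv.1.resolve_left (fun h => hv (h ▸ hdC))
      have huniq : ∀ w, w ∈ insert u (G.neighborSet u) ∩ C → w = d := by
        intro w hw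
        have hw2 : w ∈ insert v (G.neighborSet v) ∩ C := by rw [← heq]; exact hw
        rw [hcode] at hw hw2
        obtain ⟨hw1, hwC⟩ := hw
        have hadjuw : G.Adj u w := hw1.resolve_left (fun h => hu (h ▸ hwC))
        have hadjvw : G.Adj v w := hw2.1.resolve_left (fun h => hv (h ▸ hw2.2))
        by_contra hwd
        exact hsq hadjuw hadjvw.symm hdv hdu.symm huv hwd
      have hcodeu : insert u (G.neighborSet u) ∩ C = {d} :=
        Set.eq_singleton_iff_unique_mem.mpr ⟨hdmemu, huniq⟩
      have hcodev : insert v (G.neighborSet v) ∩ C = {d} := by rw [← heq]; exact hcodeu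
      have hNu : G.neighborSet u ∩ C = {d} := by
        rw [← Set.insert_inter_of_notMem hu, hcodeu]
      have hNv : G.neighborSet v ∩ C = {d} := by
        rw [← Set.insert_inter_of_notMem hv, hcodev]
      have huX : u ∈ {x | x ∉ C ∧ (G.neighborSet x ∩ C).ncard = 1} :=
        ⟨hu, by rw [hNu]; exact Set.ncard_singleton d⟩
      have hvX : v ∈ {x | x ∉ C ∧ (G.neighborSet x ∩ C).ncard = 1} :=
        ⟨hv, by rw [hNv]; exact Set.ncard_singleton d⟩
      obtain ⟨hfu3, hfuadj⟩ := hf u huX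
      obtain ⟨hfv3, hfvadj⟩ := hf v hvX
      have hfud : f u = d := by
        have : f u ∈ G.neighborSet u ∩ C := ⟨hfuadj, hC3sub hfu3⟩
        rw [hNu] at this; exact this
      have hfvd : f v = d := by
        have : f v ∈ G.neighborSet v ∩ C := ⟨hfvadj, hC3sub hfv3⟩
        rw [hNv] at this; exact this
      exact huv (hinj huX hvX (hfud.trans hfvd.symm))
end

section
/- Every finite simple graph G of order n, girth at least 5, and minimum degree at least 2 has location-domination number γLD(G) ≤ n/2. -/
/-- The location-domination number: the minimum size of a locating-dominating set. -/
noncomputable def SimpleGraph.gammaLD {V : Type*} (G : SimpleGraph V) : ℕ :=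
  sInf {k : ℕ | ∃ C : Set V, G.LocatingDominatingSet C ∧ C.ncard = k}

/-! Take a matching `M` of `G` whose vertex set is maximal. Every neighbour of an unmatched vertex
is then matched, and no edge `xy` of `M` has both ends adjacent to unmatched vertices: distinct ones
`u, u'` would give the augmenting path `u x y u'`, a common one a triangle. So one end of each edge
of `M` can be chosen such that the chosen set `C` contains all neighbours of unmatched vertices, and
`|C| = |V(M)| / 2 ≤ n / 2`. In girth at least 5 two vertices share at most one neighbour, and this
makes `C` locating: an unmatched vertex sees at least two vertices of `C`, and two matched vertices
outside `C` with the same trace in `C` would share both their partners. -/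

namespace SimpleGraph

variable {V : Type*} {G : SimpleGraph V}

theorem cliqueFree_three_of_four_le_egirth (hg : 4 ≤ G.egirth) : G.CliqueFree 3 := by
  intro s hs
  obtain ⟨u, w, hw, hlen⟩ := is3Clique_iff_exists_cycle_length_three.1 ⟨s, hs⟩
  have := le_egirth.1 hg u w hw
  rw [hlen] at this
  norm_num at this

theorem subsingleton_commonNeighbors_of_five_le_egirth (hg : 5 ≤ G.egirth) {u v : V}
    (huv : u ≠ v) : (G.commonNeighbors u v).Subsingleton := by
  intro a ha b hb
  by_contra hab
  rw [mem_commonNeighbors] at ha hb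
  let w : G.Walk u u := .cons ha.1 (.cons ha.2.symm (.cons hb.2 (.cons hb.1.symm .nil)))
  have hw : w.IsCycle := by
    simp [w, Walk.isCycle_def, ha.1.ne, hb.1.ne, hb.2.ne, ha.1.ne', ha.2.ne', hb.1.ne', huv,
      hab, Ne.symm huv]
  have := le_egirth.1 hg u w hw
  simp [w] at this
  norm_num at this

namespace Subgraph

variable {M : G.Subgraph} {s : Set V} {u w x y : V}

theorem IsMatching.deleteVerts (hM : M.IsMatching)
    (hs : ∀ ⦃v w⦄, M.Adj v w → w ∈ s → v ∈ s) : (M.deleteVerts s).IsMatching := by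
  rintro v ⟨hvM, hvs⟩
  obtain ⟨w, hvw, huniq⟩ := hM hvM
  have hws : w ∉ s := fun hws => hvs (hs hvw hws)
  exact ⟨w, deleteVerts_adj.2 ⟨hvM, hvs, M.edge_vert hvw.symm, hws, hvw⟩,
    fun w' hw' => huniq w' (deleteVerts_adj.1 hw').2.2.2.2⟩

theorem IsMatching.exists_verts_eq_insert_insert (hM : M.IsMatching) (huw : G.Adj u w)
    (hu : u ∉ M.verts) (hw : w ∉ M.verts) :
    ∃ M' : G.Subgraph, M'.IsMatching ∧ M'.verts = insert u (insert w M.verts) := by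
  refine ⟨M ⊔ G.subgraphOfAdj huw, hM.sup (.subgraphOfAdj huw) ?_, ?_⟩
  · rw [hM.support_eq_verts, support_subgraphOfAdj, Set.disjoint_insert_right,
      Set.disjoint_singleton_right]
    exact ⟨hu, hw⟩
  · ext
    simp only [verts_sup, subgraphOfAdj_verts, Set.mem_union, Set.mem_insert_iff,
      Set.mem_singleton_iff]
    tauto

theorem IsMatching.exists_verts_eq_insert_insert_of_adj (hM : M.IsMatching) (hxy : M.Adj x y)
    {u' : V} (hxu : G.Adj x u) (hyu' : G.Adj y u') (hu : u ∉ M.verts) (hu' : u' ∉ M.verts)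
    (huu' : u ≠ u') :
    ∃ M' : G.Subgraph, M'.IsMatching ∧ M'.verts = insert u (insert u' M.verts) := by
  set M₀ := M.deleteVerts {x, y}
  have hM₀ : M₀.IsMatching := hM.deleteVerts fun v w hvw hw => by
    rcases hw with rfl | rfl
    · exact .inr (hM.eq_of_adj_right hvw hxy.symm)
    · exact .inl (hM.eq_of_adj_right hvw hxy)
  have hx := M.edge_vert hxy
  have hy := M.edge_vert hxy.symm
  have huy : u ≠ y := fun h => hu (h ▸ hy)
  have hu'x : u' ≠ x := fun h => hu' (h ▸ hx)
  have hu'y : u' ≠ y := fun h => hu' (h ▸ hy)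
  have hM₁ : (M₀ ⊔ G.subgraphOfAdj hxu).IsMatching := by
    refine hM₀.sup (.subgraphOfAdj hxu) ?_
    rw [hM₀.support_eq_verts, support_subgraphOfAdj, Set.disjoint_insert_right,
      Set.disjoint_singleton_right]
    exact ⟨fun h => h.2 (.inl rfl), fun h => hu h.1⟩
  refine ⟨M₀ ⊔ G.subgraphOfAdj hxu ⊔ G.subgraphOfAdj hyu',
    hM₁.sup (.subgraphOfAdj hyu') ?_, ?_⟩
  · rw [hM₁.support_eq_verts, support_subgraphOfAdj, Set.disjoint_insert_right,
      Set.disjoint_singleton_right]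
    simp [M₀, (M.adj_sub hxy).ne', Ne.symm huy, hu'x, Ne.symm huu', hu', hu'y]
  · ext v
    simp only [M₀, verts_sup, deleteVerts_verts, subgraphOfAdj_verts, Set.mem_union,
      Set.mem_sdiff, Set.mem_insert_iff, Set.mem_singleton_iff]
    grind

theorem mem_verts_of_adj_of_maximalFor (hM : MaximalFor IsMatching verts M) (huw : G.Adj u w)
    (hu : u ∉ M.verts) : w ∈ M.verts := by
  by_contra hw
  obtain ⟨M', hM', hverts⟩ := hM.1.exists_verts_eq_insert_insert huw hu hw
  exact hu (hM.2 hM' (hverts ▸ (Set.subset_insert _ _).trans (Set.subset_insert _ _))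
    (hverts ▸ Set.mem_insert u _))

theorem eq_of_adj_of_maximalFor (hM : MaximalFor IsMatching verts M) (hxy : M.Adj x y) {u' : V}
    (hxu : G.Adj x u) (hyu' : G.Adj y u') (hu : u ∉ M.verts) (hu' : u' ∉ M.verts) : u = u' := by
  by_contra huu'
  obtain ⟨M', hM', hverts⟩ :=
    hM.1.exists_verts_eq_insert_insert_of_adj hxy hxu hyu' hu hu' huu'
  exact hu (hM.2 hM' (hverts ▸ (Set.subset_insert _ _).trans (Set.subset_insert _ _))
    (hverts ▸ Set.mem_insert u _))

theorem IsMatching.exists_transversal (hM : M.IsMatching) (S : Set V)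
    (hS : ∀ ⦃x y⦄, M.Adj x y → x ∈ S → y ∉ S) :
    ∃ C ⊆ M.verts, S ∩ M.verts ⊆ C ∧
      ∀ ⦃x y⦄, M.Adj x y → (x ∈ C ↔ y ∉ C) := by
  classical
  let : LinearOrder V := linearOrderOfSTO WellOrderingRel
  refine ⟨{x | ∃ y, M.Adj x y ∧ (x ∈ S ∨ y ∉ S ∧ x < y)},
    fun x ⟨y, hxy, _⟩ => M.edge_vert hxy, fun x ⟨hxS, hxM⟩ => ?_, fun x y hxy => ?_⟩
  · obtain ⟨y, hxy, -⟩ := hM hxM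
    exact ⟨y, hxy, .inl hxS⟩
  · have hpartner {v w : V} (hvw : M.Adj v w) :
        (∃ z, M.Adj v z ∧ (v ∈ S ∨ z ∉ S ∧ v < z)) ↔ v ∈ S ∨ w ∉ S ∧ v < w :=
      ⟨fun ⟨z, hvz, h⟩ => hM.eq_of_adj_left hvz hvw ▸ h, fun h => ⟨_, hvw, h⟩⟩
    simp only [Set.mem_ofPred_eq, hpartner hxy, hpartner hxy.symm]
    have := hS hxy
    have := hS hxy.symm
    have := (M.adj_sub hxy).ne
    grind

theorem IsMatching.two_mul_ncard_le [Finite V] (hM : M.IsMatching) {C : Set V}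
    (hCM : C ⊆ M.verts) (hC : ∀ ⦃x y⦄, M.Adj x y → (x ∈ C ↔ y ∉ C)) :
    2 * C.ncard ≤ Nat.card V := by
  choose! p hp using fun x (hx : x ∈ C) => (hM (hCM hx)).exists
  have hle : C.ncard ≤ Cᶜ.ncard :=
    Set.ncard_le_ncard_of_injOn p (fun x hx => (hC (hp x hx)).1 hx)
      fun a ha b hb hab => hM.eq_of_adj_right (hp a ha) (hab ▸ hp b hb)
  have := C.ncard_add_ncard_compl
  omega

end Subgraph

variable {M : G.Subgraph} {C : Set V}

theorem gammaLD_le_ncard (hC : G.LocatingDominatingSet C) : G.gammaLD ≤ C.ncard :=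
  Nat.sInf_le ⟨C, hC, rfl⟩

theorem dominatingSet_of_isMatching (hM : M.IsMatching)
    (hC : ∀ ⦃x y⦄, M.Adj x y → (x ∈ C ↔ y ∉ C))
    (hCU : ∀ ⦃u w⦄, u ∉ M.verts → G.Adj u w → w ∈ C)
    (hU : ∀ u ∉ M.verts, (G.neighborSet u).Nonempty) : G.DominatingSet C := by
  intro v
  by_cases hv : v ∈ C
  · exact ⟨v, hv, .inl rfl⟩
  by_cases hvM : v ∈ M.verts
  · obtain ⟨w, hvw, -⟩ := hM hvM
    exact ⟨w, (hC hvw.symm).2 hv, .inr (M.adj_sub hvw.symm)⟩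
  · obtain ⟨w, hw⟩ := hU v hvM
    exact ⟨w, hCU hvM hw, .inr hw.symm⟩

theorem locatingDominatingSet_of_isMatching (hg : 5 ≤ G.egirth) (hM : M.IsMatching)
    (hC : ∀ ⦃x y⦄, M.Adj x y → (x ∈ C ↔ y ∉ C))
    (hCU : ∀ ⦃u w⦄, u ∉ M.verts → G.Adj u w → w ∈ C)
    (hdeg : ∀ u ∉ M.verts, 2 ≤ (G.neighborSet u).ncard) : G.LocatingDominatingSet C := by
  refine ⟨dominatingSet_of_isMatching hM hC hCU fun u hu => ?_, fun u hu v hv huv heq => ?_⟩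
  · exact Set.nonempty_of_ncard_ne_zero (two_pos.trans_le (hdeg u hu)).ne'
  have hsub : (G.neighborSet u ∩ C).Subsingleton :=
    (subsingleton_commonNeighbors_of_five_le_egirth hg huv).anti
      fun a ha => ⟨ha.1, (heq ▸ ha).1⟩
  have hunmatched (a : V) (ha : a ∉ M.verts) : ¬(G.neighborSet a ∩ C).Subsingleton := by
    have hfin := Set.finite_of_ncard_pos (two_pos.trans_le (hdeg a ha))
    obtain ⟨x, hx, y, hy, hxy⟩ := (Set.one_lt_ncard hfin).1 (hdeg a ha)
    exact fun h => hxy (h ⟨hx, hCU ha hx⟩ ⟨hy, hCU ha hy⟩)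
  by_cases huM : u ∉ M.verts
  · exact hunmatched u huM hsub
  by_cases hvM : v ∉ M.verts
  · exact hunmatched v hvM (heq ▸ hsub)
  obtain ⟨pu, hpu, -⟩ := hM (not_not.1 huM)
  obtain ⟨pv, hpv, -⟩ := hM (not_not.1 hvM)
  have hpuC : pu ∈ G.neighborSet u ∩ C := ⟨M.adj_sub hpu, (hC hpu.symm).2 hu⟩
  have hpvC : pv ∈ G.neighborSet u ∩ C := heq ▸ ⟨M.adj_sub hpv, (hC hpv.symm).2 hv⟩
  exact huv (hM.eq_of_adj_right hpu (hsub hpuC hpvC ▸ hpv))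

theorem exists_locatingDominatingSet_two_mul_ncard_le [Finite V] (hg : 5 ≤ G.egirth)
    (hdeg : ∀ v, 2 ≤ (G.neighborSet v).ncard) :
    ∃ C : Set V, G.LocatingDominatingSet C ∧ 2 * C.ncard ≤ Nat.card V := by
  obtain ⟨M, hM⟩ := (Set.toFinite {M : G.Subgraph | M.IsMatching}).exists_maximalFor
    Subgraph.verts _ ⟨⊥, fun _ h => h.elim⟩
  replace hM : MaximalFor Subgraph.IsMatching Subgraph.verts M := hM
  set S := {w | ∃ u ∉ M.verts, G.Adj u w}
  have hS : ∀ ⦃x y⦄, M.Adj x y → x ∈ S → y ∉ S := by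
    classical
    rintro x y hxy ⟨u, hu, hux⟩ ⟨u', hu', hu'y⟩
    obtain rfl := Subgraph.eq_of_adj_of_maximalFor hM hxy hux.symm hu'y.symm hu hu'
    exact cliqueFree_three_of_four_le_egirth (le_trans (by norm_num) hg) {x, y, u}
      (is3Clique_triple_iff.2 ⟨M.adj_sub hxy, hux.symm, hu'y.symm⟩)
  obtain ⟨C, hCM, hSC, hC⟩ := hM.1.exists_transversal S hS
  refine ⟨C, locatingDominatingSet_of_isMatching hg hM.1 hC (fun u w hu huw => ?_)
    (fun u _ => hdeg u), hM.1.two_mul_ncard_le hCM hC⟩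
  exact hSC ⟨⟨u, hu, huw⟩, Subgraph.mem_verts_of_adj_of_maximalFor hM huw hu⟩

end SimpleGraph

/-- Theorem: every graph of order `n`, girth at least 5 and minimum degree at
least 2 has location-domination number at most `n/2`. -/
theorem gammaLD_le_half_order
    {V : Type*} [Fintype V] (G : SimpleGraph V) (hg : 5 ≤ G.egirth)
    (hdeg : ∀ v : V, 2 ≤ (G.neighborSet v).ncard) :
    (G.gammaLD : ℝ) ≤ (Fintype.card V : ℝ) / 2 := by
  obtain ⟨C, hLD, hcard⟩ := G.exists_locatingDominatingSet_two_mul_ncard_le hg hdeg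
  have hγ := SimpleGraph.gammaLD_le_ncard hLD
  rw [Nat.card_eq_fintype_card] at hcard
  rw [le_div_iff₀ two_pos]
  exact_mod_cast (by omega : G.gammaLD * 2 ≤ Fintype.card V)
end

section
/- Every connected cubic identifiable finite simple graph G of order n and girth at least 5 has identifying code number γID(G) ≤ (31/45)·n. -/
/-- The identifying code number: the minimum size of an identifying code. -/
noncomputable def SimpleGraph.gammaID {V : Type*} (G : SimpleGraph V) : ℕ :=
  sInf {k : ℕ | ∃ C : Set V, G.IdentifyingCode C ∧ C.ncard = k}

/-!
Pick a random set `D` containing each vertex independently with probability `3/5`, add every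
vertex that `D` does not dominate, and for every pair of vertices at distance 1 or 2 whose closed
neighbourhoods meet `D` in the same set add one vertex separating them. Pairs at distance at least
3 are then separated by domination alone. In a cubic graph of girth at least 5 the closed
neighbourhoods of adjacent vertices differ in 4 vertices and those of vertices at distance 2 in 6,
so the expected size of the resulting identifying code is at most
`(3/5 + (2/5)^4 + (3/2)(2/5)^4 + 3(2/5)^6) n ≤ (31/45) n`.
-/

open Finset symmDiff

/-- The probability that a random subset, containing each element independently with
probability `p`, equals `D`. -/
noncomputable def bernoulliWeight {α : Type*} [Fintype α] (p : ℝ) (D : Finset α) : ℝ :=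
  p ^ #D * (1 - p) ^ (Fintype.card α - #D)

section BernoulliWeight

variable {α : Type*} [Fintype α] (p : ℝ)

lemma bernoulliWeight_pos (hp0 : 0 < p) (hp1 : p < 1) (D : Finset α) :
    0 < bernoulliWeight p D := by
  have : 0 < 1 - p := by linarith
  unfold bernoulliWeight
  positivity

lemma sum_bernoulliWeight : ∑ D : Finset α, bernoulliWeight p D = 1 := by
  simp [bernoulliWeight, Fintype.sum_pow_mul_eq_add_pow]

lemma exists_le_of_sum_bernoulliWeight_mul_le (hp0 : 0 < p) (hp1 : p < 1)
    {f : Finset α → ℝ} {B : ℝ} (h : ∑ D, bernoulliWeight p D * f D ≤ B) : ∃ D, f D ≤ B := by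
  by_contra! hlt
  have : ∑ D, bernoulliWeight p D * B < ∑ D, bernoulliWeight p D * f D :=
    sum_lt_sum_of_nonempty univ_nonempty fun D _ =>
      mul_lt_mul_of_pos_left (hlt D) (bernoulliWeight_pos p hp0 hp1 D)
  rw [← sum_mul, sum_bernoulliWeight, one_mul] at this
  linarith

variable [DecidableEq α]

lemma sum_bernoulliWeight_filter_disjoint (S : Finset α) :
    ∑ D with Disjoint S D, bernoulliWeight p D = (1 - p) ^ #S := by
  have hfilter : ({D | Disjoint S D} : Finset (Finset α)) = Sᶜ.powerset := by
    ext D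
    simp [subset_compl_iff_disjoint_left]
  have hweight : ∀ D ∈ Sᶜ.powerset,
      bernoulliWeight p D = p ^ #D * (1 - p) ^ (#Sᶜ - #D) * (1 - p) ^ #S := by
    intro D hD
    have hle := card_le_card (mem_powerset.mp hD)
    have hS := card_compl_add_card S
    rw [bernoulliWeight, mul_assoc, ← pow_add]
    congr 2
    omega
  rw [hfilter, sum_congr rfl hweight, ← sum_mul, sum_pow_mul_eq_add_pow, add_sub_cancel,
    one_pow, one_mul]

lemma sum_bernoulliWeight_mul_card_filter_disjoint {ι : Type*} (P : Finset ι)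
    (S : ι → Finset α) :
    ∑ D : Finset α, bernoulliWeight p D * #{i ∈ P | Disjoint (S i) D}
      = ∑ i ∈ P, (1 - p) ^ #(S i) := by
  simp_rw [card_filter, Nat.cast_sum, mul_sum]
  rw [sum_comm]
  refine sum_congr rfl fun i _ => ?_
  rw [← sum_bernoulliWeight_filter_disjoint, sum_filter]
  refine sum_congr rfl fun D _ => ?_
  split_ifs <;> simp

lemma sum_bernoulliWeight_mul_card :
    ∑ D : Finset α, bernoulliWeight p D * #D = p * Fintype.card α := by
  have hcard : ∀ D : Finset α,
      (#D : ℝ) = Fintype.card α - #{v ∈ univ | Disjoint {v} D} := by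
    intro D
    have : ({v ∈ univ | Disjoint {v} D} : Finset α) = Dᶜ := by ext; simp
    rw [this, card_compl, Nat.cast_sub (card_le_univ D)]
    ring
  rw [sum_congr rfl fun D _ => congrArg _ (hcard D)]
  simp only [mul_sub, sum_sub_distrib, ← sum_mul, sum_bernoulliWeight,
    sum_bernoulliWeight_mul_card_filter_disjoint _ univ fun v => {v}]
  simp only [card_singleton, pow_one, sum_const, card_univ, nsmul_eq_mul]
  ring

end BernoulliWeight

namespace Finset

variable {α : Type*} [DecidableEq α]

lemma card_symmDiff_add_two_mul_card_inter (s t : Finset α) :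
    #(s ∆ t) + 2 * #(s ∩ t) = #s + #t := by
  rw [symmDiff_def, sup_eq_union, card_union_of_disjoint disjoint_sdiff_sdiff]
  have hs := card_sdiff_add_card_inter s t
  have ht := card_sdiff_add_card_inter t s
  rw [inter_comm] at ht
  omega

lemma disjoint_symmDiff_iff_inter_eq_inter {s t C : Finset α} :
    Disjoint (s ∆ t) C ↔ s ∩ C = t ∩ C := by
  rw [disjoint_iff, inf_symmDiff_distrib_right, symmDiff_eq_bot]
  rfl

lemma card_filter_not_isDiag_sym2 (s : Finset α) :
    #{z ∈ s.sym2 | ¬ z.IsDiag} = (#s).choose 2 := by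
  have hdiag : {z ∈ s.sym2 | z.IsDiag} = s.image Sym2.diag := by
    ext z
    induction z using Sym2.ind with
    | _ a b =>
      simp only [mem_filter, mk_mem_sym2_iff, Sym2.mk_isDiag_iff, mem_image]
      constructor
      · rintro ⟨⟨ha, -⟩, rfl⟩
        exact ⟨a, ha, rfl⟩
      · rintro ⟨c, hc, hcz⟩
        obtain ⟨rfl, rfl⟩ | ⟨rfl, rfl⟩ := Sym2.eq_iff.mp hcz <;> exact ⟨⟨hc, hc⟩, rfl⟩
  have h := card_filter_add_card_filter_not (s := s.sym2) (p := Sym2.IsDiag)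
  rw [hdiag, card_image_of_injective _ Sym2.diag_injective, card_sym2,
    Nat.choose_succ_succ' _ 1, Nat.choose_one_right, one_add_one_eq_two] at h
  omega

lemma exists_card_le_forall_not_disjoint {ι : Type*} (P : Finset ι) (S : ι → Finset α)
    (hS : ∀ i ∈ P, (S i).Nonempty) :
    ∃ F : Finset α, #F ≤ #P ∧ ∀ i ∈ P, ¬ Disjoint (S i) F := by
  choose f hf using hS
  refine ⟨P.attach.image fun i => f i.1 i.2, card_image_le.trans (card_attach).le, ?_⟩
  intro i hi
  exact not_disjoint_iff.mpr ⟨f i hi, hf i hi, mem_image.mpr ⟨⟨i, hi⟩, mem_attach _ _, rfl⟩⟩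

end Finset

namespace SimpleGraph

variable {V : Type*} {G : SimpleGraph V} {a b c d : V}

lemma not_adj_of_adj_of_adj (hg : 4 ≤ G.egirth) (hab : G.Adj a b) (hbc : G.Adj b c) :
    ¬ G.Adj c a := by
  intro hca
  have hcyc : (Walk.cons hab (Walk.cons hbc (Walk.cons hca Walk.nil))).IsCycle := by
    rw [Walk.isCycle_def]
    refine ⟨⟨?_⟩, by simp, ?_⟩ <;>
      simp_all [hab.ne, hbc.ne, hca.ne, hab.ne', hca.ne']
  have := hg.trans (G.egirth_le_length hcyc)
  norm_num at this

lemma eq_of_adj_of_adj_of_adj_of_adj (hg : 5 ≤ G.egirth) (hab : G.Adj a b) (hbc : G.Adj b c)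
    (hcd : G.Adj c d) (hda : G.Adj d a) (hac : a ≠ c) : b = d := by
  by_contra hbd
  have hcyc :
      (Walk.cons hab (Walk.cons hbc (Walk.cons hcd (Walk.cons hda Walk.nil)))).IsCycle := by
    rw [Walk.isCycle_def]
    refine ⟨⟨?_⟩, by simp, ?_⟩ <;>
      simp_all [hab.ne, hbc.ne, hcd.ne, hda.ne, hab.ne', hda.ne', Ne.symm hac]
  have := hg.trans (G.egirth_le_length hcyc)
  norm_num at this

lemma gammaID_le_card {C : Finset V} (hC : G.IdentifyingCode C) : G.gammaID ≤ #C :=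
  Nat.sInf_le ⟨C, hC, Set.ncard_coe_finset C⟩

variable [Fintype V] [DecidableRel G.Adj]

lemma IsRegularOfDegree.two_mul_card_edgeFinset {k : ℕ} (hG : G.IsRegularOfDegree k) :
    2 * #G.edgeFinset = k * Fintype.card V := by
  rw [← sum_degrees_eq_twice_card_edges, sum_congr rfl fun v _ => hG.degree_eq v, sum_const,
    card_univ, smul_eq_mul, mul_comm]

variable [DecidableEq V]

variable (G) in
def closedNbhd (v : V) : Finset V := insert v (G.neighborFinset v)

lemma mem_closedNbhd {v x : V} : x ∈ G.closedNbhd v ↔ x = v ∨ G.Adj v x := by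
  simp [closedNbhd]

lemma coe_closedNbhd (v : V) : (G.closedNbhd v : Set V) = insert v (G.neighborSet v) := by
  simp [closedNbhd]

lemma IsRegularOfDegree.card_closedNbhd {k : ℕ} (hG : G.IsRegularOfDegree k) (v : V) :
    #(G.closedNbhd v) = k + 1 := by
  rw [closedNbhd, card_insert_of_notMem (by simp), card_neighborFinset_eq_degree,
    hG.degree_eq]

variable (G) in
def separators : Sym2 V → Finset V :=
  Sym2.lift ⟨fun u v => G.closedNbhd u ∆ G.closedNbhd v, fun _ _ => symmDiff_comm _ _⟩

@[simp]
lemma separators_mk (u v : V) : G.separators s(u, v) = G.closedNbhd u ∆ G.closedNbhd v := rfl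

variable (G) in
def undominated (D : Finset V) : Finset V := {v | Disjoint (G.closedNbhd v) D}

variable (G) in
def commonNeighborPairs : Finset (Sym2 V) :=
  univ.biUnion fun w => {z ∈ (G.neighborFinset w).sym2 | ¬ z.IsDiag}

lemma IsRegularOfDegree.card_commonNeighborPairs_le {k : ℕ} (hG : G.IsRegularOfDegree k) :
    #G.commonNeighborPairs ≤ k.choose 2 * Fintype.card V := by
  refine card_biUnion_le.trans ?_
  simp only [card_filter_not_isDiag_sym2, card_neighborFinset_eq_degree, hG.degree_eq,
    sum_const, card_univ, smul_eq_mul, mul_comm, le_refl]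

lemma mk_mem_edgeFinset_union_commonNeighborPairs {u v : V} (huv : u ≠ v)
    (h : ¬ Disjoint (G.closedNbhd u) (G.closedNbhd v)) :
    s(u, v) ∈ G.edgeFinset ∪ G.commonNeighborPairs := by
  obtain ⟨x, hxu, hxv⟩ := not_disjoint_iff.mp h
  rw [mem_closedNbhd] at hxu hxv
  rcases hxu with rfl | hux
  · rcases hxv with rfl | hvx
    · exact absurd rfl huv
    · exact mem_union_left _ (mem_edgeFinset.mpr hvx.symm)
  · rcases hxv with rfl | hvx
    · exact mem_union_left _ (mem_edgeFinset.mpr hux)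
    · refine mem_union_right _ (mem_biUnion.mpr ⟨x, mem_univ _, ?_⟩)
      simp [mem_neighborFinset, hux.symm, hvx.symm, huv]

lemma inter_closedNbhd_subset_of_adj (hg : 4 ≤ G.egirth) {u v : V} (huv : G.Adj u v) :
    G.closedNbhd u ∩ G.closedNbhd v ⊆ {u, v} := by
  intro x hx
  rw [mem_inter, mem_closedNbhd, mem_closedNbhd] at hx
  rw [mem_insert, mem_singleton]
  rcases hx with ⟨rfl | hux, rfl | hvx⟩
  · exact Or.inl rfl
  · exact Or.inl rfl
  · exact Or.inr rfl
  · exact absurd hux.symm (not_adj_of_adj_of_adj hg huv hvx)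

lemma card_inter_closedNbhd_le_one (hg : 5 ≤ G.egirth) {u v : V} (huv : u ≠ v)
    (hnadj : ¬ G.Adj u v) : #(G.closedNbhd u ∩ G.closedNbhd v) ≤ 1 := by
  have hcommon : ∀ x ∈ G.closedNbhd u ∩ G.closedNbhd v, G.Adj u x ∧ G.Adj v x := by
    intro x hx
    rw [mem_inter, mem_closedNbhd, mem_closedNbhd] at hx
    rcases hx with ⟨rfl | hux, rfl | hvx⟩
    · exact absurd rfl huv
    · exact absurd hvx.symm hnadj
    · exact absurd hux hnadj
    · exact ⟨hux, hvx⟩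
  refine card_le_one.mpr fun x hx y hy => ?_
  obtain ⟨hux, hvx⟩ := hcommon x hx
  obtain ⟨huy, hvy⟩ := hcommon y hy
  exact eq_of_adj_of_adj_of_adj_of_adj hg hux hvx.symm hvy huy.symm huv

lemma two_mul_le_card_separators_add_two {k : ℕ} (hG : G.IsRegularOfDegree k)
    (hg : 4 ≤ G.egirth) {z : Sym2 V} (hz : z ∈ G.edgeFinset) :
    2 * k ≤ #(G.separators z) + 2 := by
  refine Sym2.ind (fun u v hz => ?_) z hz
  have hinter := card_le_card (inter_closedNbhd_subset_of_adj hg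
    (G.mem_edgeSet.mp (mem_edgeFinset.mp hz)))
  have hsum := card_symmDiff_add_two_mul_card_inter (G.closedNbhd u) (G.closedNbhd v)
  have hpair := card_le_two (a := u) (b := v)
  rw [hG.card_closedNbhd, hG.card_closedNbhd] at hsum
  rw [separators_mk]
  omega

lemma two_mul_le_card_separators {k : ℕ} (hG : G.IsRegularOfDegree k)
    (hg : 5 ≤ G.egirth) {z : Sym2 V} (hz : z ∈ G.commonNeighborPairs) :
    2 * k ≤ #(G.separators z) := by
  refine Sym2.ind (fun u v hz => ?_) z hz
  simp only [commonNeighborPairs, mem_biUnion, mem_univ, true_and, mem_filter,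
    mk_mem_sym2_iff, mem_neighborFinset, Sym2.mk_isDiag_iff] at hz
  obtain ⟨w, ⟨hwu, hwv⟩, huv⟩ := hz
  have hnadj : ¬ G.Adj u v := not_adj_of_adj_of_adj (le_trans (by norm_num) hg) hwv.symm hwu
  have hinter := card_inter_closedNbhd_le_one hg huv hnadj
  have hsum := card_symmDiff_add_two_mul_card_inter (G.closedNbhd u) (G.closedNbhd v)
  rw [hG.card_closedNbhd, hG.card_closedNbhd] at hsum
  rw [separators_mk]
  omega

lemma identifyingCode_of_forall_not_disjoint {C : Finset V}
    (hdom : ∀ v, ¬ Disjoint (G.closedNbhd v) C)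
    (hsep : ∀ u v, u ≠ v → ¬ Disjoint (G.closedNbhd u) (G.closedNbhd v) →
      ¬ Disjoint (G.separators s(u, v)) C) :
    G.IdentifyingCode C := by
  refine ⟨fun v => ?_, fun u v huv htrace => ?_⟩
  · obtain ⟨d, hdv, hdC⟩ := not_disjoint_iff.mp (hdom v)
    exact ⟨d, hdC, (mem_closedNbhd.mp hdv).imp id Adj.symm⟩
  · rw [← coe_closedNbhd, ← coe_closedNbhd, ← coe_inter, ← coe_inter, coe_inj] at htrace
    by_cases hfar : Disjoint (G.closedNbhd u) (G.closedNbhd v)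
    · obtain ⟨d, hdu, hdC⟩ := not_disjoint_iff.mp (hdom u)
      have hdv : d ∈ G.closedNbhd v ∩ C := htrace ▸ mem_inter.mpr ⟨hdu, hdC⟩
      exact Finset.disjoint_left.mp hfar hdu (mem_inter.mp hdv).1
    · exact hsep u v huv hfar (disjoint_symmDiff_iff_inter_eq_inter.mpr htrace)

lemma Identifiable.separators_nonempty (hid : G.Identifiable) {z : Sym2 V} (hz : ¬ z.IsDiag) :
    (G.separators z).Nonempty := by
  refine Sym2.ind (fun u v hz => ?_) z hz
  rw [separators_mk, nonempty_iff_ne_empty, Ne, ← bot_eq_empty, symmDiff_eq_bot]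
  intro h
  exact hz (Sym2.mk_isDiag_iff.mpr (hid u v (by rw [← coe_closedNbhd, ← coe_closedNbhd, h])))

lemma not_isDiag_of_mem_edgeFinset_union_commonNeighborPairs {z : Sym2 V}
    (hz : z ∈ G.edgeFinset ∪ G.commonNeighborPairs) : ¬ z.IsDiag := by
  rcases mem_union.mp hz with hz | hz
  · exact G.not_isDiag_of_mem_edgeSet (mem_edgeFinset.mp hz)
  · obtain ⟨w, -, hw⟩ := mem_biUnion.mp hz
    exact (mem_filter.mp hw).2

theorem Identifiable.exists_identifyingCode_card_le (hid : G.Identifiable) (D : Finset V) :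
    ∃ C : Finset V, G.IdentifyingCode C ∧
      #C ≤ #D + #(G.undominated D) + #{z ∈ G.edgeFinset | Disjoint (G.separators z) D}
        + #{z ∈ G.commonNeighborPairs | Disjoint (G.separators z) D} := by
  set P := {z ∈ G.edgeFinset ∪ G.commonNeighborPairs | Disjoint (G.separators z) D} with hPdef
  have hPcard : #P ≤ #{z ∈ G.edgeFinset | Disjoint (G.separators z) D}
      + #{z ∈ G.commonNeighborPairs | Disjoint (G.separators z) D} := by
    rw [hPdef, filter_union]
    exact card_union_le _ _
  have hP : ∀ z ∈ P, (G.separators z).Nonempty := fun z hz =>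
    hid.separators_nonempty
      (not_isDiag_of_mem_edgeFinset_union_commonNeighborPairs (mem_filter.mp hz).1)
  obtain ⟨F, hFP, hF⟩ := exists_card_le_forall_not_disjoint P G.separators hP
  refine ⟨D ∪ G.undominated D ∪ F, identifyingCode_of_forall_not_disjoint ?_ ?_, ?_⟩
  · intro v
    by_cases hv : Disjoint (G.closedNbhd v) D
    · have hvU : v ∈ G.undominated D := mem_filter.mpr ⟨mem_univ v, hv⟩
      exact not_disjoint_iff.mpr ⟨v, mem_insert_self _ _,
        mem_union_left _ (mem_union_right _ hvU)⟩
    · exact fun h => hv (h.mono_right (subset_union_left.trans subset_union_left))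
  · intro u v huv hnear
    by_cases hD : Disjoint (G.separators s(u, v)) D
    · have hP : s(u, v) ∈ P :=
        mem_filter.mpr ⟨mk_mem_edgeFinset_union_commonNeighborPairs huv hnear, hD⟩
      exact fun h => hF _ hP (h.mono_right subset_union_right)
    · exact fun h => hD (h.mono_right (subset_union_left.trans subset_union_left))
  · grw [card_union_le, card_union_le, hFP, hPcard, ← add_assoc]

lemma IsRegularOfDegree.exists_card_add_card_undominated_add_le (hG : G.IsRegularOfDegree 3)
    (hg : 5 ≤ G.egirth) :
    ∃ D : Finset V, (#D + #(G.undominated D) + #{z ∈ G.edgeFinset | Disjoint (G.separators z) D}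
        + #{z ∈ G.commonNeighborPairs | Disjoint (G.separators z) D} : ℝ)
      ≤ 31 / 45 * Fintype.card V := by
  refine exists_le_of_sum_bernoulliWeight_mul_le (3 / 5) (by norm_num) (by norm_num) ?_
  simp only [mul_add, sum_add_distrib, sum_bernoulliWeight_mul_card, undominated,
    sum_bernoulliWeight_mul_card_filter_disjoint]
  have hundom :
      ∑ v, (1 - 3 / 5 : ℝ) ^ #(G.closedNbhd v) = Fintype.card V * (1 - 3 / 5) ^ 4 := by
    simp only [hG.card_closedNbhd, sum_const, card_univ, nsmul_eq_mul]
  have hedge : ∑ z ∈ G.edgeFinset, (1 - 3 / 5 : ℝ) ^ #(G.separators z)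
      ≤ #G.edgeFinset * (1 - 3 / 5) ^ 4 := by
    rw [← nsmul_eq_mul]
    refine sum_le_card_nsmul _ _ _ fun z hz => ?_
    have := two_mul_le_card_separators_add_two hG (le_trans (by norm_num) hg) hz
    exact pow_le_pow_of_le_one (by norm_num) (by norm_num) (by omega)
  have hcommon : ∑ z ∈ G.commonNeighborPairs, (1 - 3 / 5 : ℝ) ^ #(G.separators z)
      ≤ #G.commonNeighborPairs * (1 - 3 / 5) ^ 6 := by
    rw [← nsmul_eq_mul]
    refine sum_le_card_nsmul _ _ _ fun z hz => ?_
    have := two_mul_le_card_separators hG hg hz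
    exact pow_le_pow_of_le_one (by norm_num) (by norm_num) (by omega)
  have hE : (2 * #G.edgeFinset : ℝ) = 3 * Fintype.card V := by
    exact_mod_cast hG.two_mul_card_edgeFinset
  have hCN : (#G.commonNeighborPairs : ℝ) ≤ 3 * Fintype.card V := by
    exact_mod_cast hG.card_commonNeighborPairs_le
  norm_num at hundom hedge hcommon ⊢
  linarith

end SimpleGraph

theorem gammaID_le_of_connected_cubic_general
    {V : Type*} [Fintype V] (G : SimpleGraph V)
    (hcubic : ∀ v : V, (G.neighborSet v).ncard = 3) (hid : G.Identifiable)
    (hg : 5 ≤ G.egirth) :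
    (G.gammaID : ℝ) ≤ 31 / 45 * Fintype.card V := by
  classical
  have hG : G.IsRegularOfDegree 3 := fun v => by
    rw [← SimpleGraph.card_neighborFinset_eq_degree, SimpleGraph.neighborFinset_def,
      ← Set.ncard_eq_toFinset_card', hcubic]
  obtain ⟨D, hD⟩ := hG.exists_card_add_card_undominated_add_le hg
  obtain ⟨C, hC, hcard⟩ := hid.exists_identifyingCode_card_le D
  calc (G.gammaID : ℝ) ≤ #C := by exact_mod_cast SimpleGraph.gammaID_le_card hC
    _ ≤ _ := by exact_mod_cast hcard
    _ ≤ 31 / 45 * Fintype.card V := hD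

/-- Corollary: every connected cubic identifiable graph of order `n` and girth at
least 5 has identifying code number at most `(31/45)·n`. -/
theorem gammaID_le_of_connected_cubic
    {V : Type*} [Fintype V] (G : SimpleGraph V) (hconn : G.Connected)
    (hcubic : ∀ v : V, (G.neighborSet v).ncard = 3) (hid : G.Identifiable)
    (hg : 5 ≤ G.egirth) :
    (G.gammaID : ℝ) ≤ 31 / 45 * Fintype.card V :=
  gammaID_le_of_connected_cubic_general G hcubic hid hg
end

section
/- For every integer k ≥ 2 there exists a connected finite simple graph G of order n = 6k + 1, with girth at least 5, minimum degree at least 2, and location-domination number γLD(G) = (n − 1)/2 = 3k. (In particular, there are infinitely many connected graphs of girth at least 5 and minimum degree at least 2 attaining γLD(G) = (n − 1)/2.) -/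
/-! The graph is `apexCopies (cycleGraph 6) 0 (Fin k)`: an apex `none` joined to vertex `0` of
each of `k` disjoint six-cycles. Vertices `0, 2, 4` of every cycle form a locating-dominating set
of size `3k`. Conversely, a finite check on `C₆` shows that a locating-dominating set meets every
cycle in at least two vertices, and in exactly two only if it contains the apex and vertex `0` of
that cycle has the apex as its only neighbour in the set. Two such cycles would give two vertices
with the same trace `{none}`, so at most one cycle is met only twice, and the apex pays for it. -/

namespace SimpleGraph

variable {V : Type*} {G : SimpleGraph V}

theorem five_le_egirth_of_no_short_cycles
    (h3 : ∀ a b c, G.Adj a b → G.Adj b c → ¬G.Adj c a)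
    (h4 : ∀ a b c d, G.Adj a b → G.Adj b c → G.Adj c d → G.Adj d a → a = c ∨ b = d) :
    5 ≤ G.egirth := by
  rw [le_egirth]
  intro a w hw
  suffices 5 ≤ w.length by exact_mod_cast this
  by_contra! hlt
  have h3le := hw.three_le_length
  have hnodup := hw.support_nodup
  rcases w with _ | ⟨hab, _ | ⟨hbc, _ | ⟨hca, _ | ⟨hda, _ | ⟨_, w⟩⟩⟩⟩⟩
    <;> simp only [Walk.length_cons, Walk.length_nil] at h3le hlt <;> try omega
  · exact h3 _ _ _ hab hbc hca
  · simp only [Walk.support_cons, Walk.support_nil, List.tail_cons, List.nodup_cons,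
      List.mem_cons, List.not_mem_nil] at hnodup
    rcases h4 _ _ _ _ hab hbc hca hda with h | h <;> simp_all

theorem gammaLD_eq_of_forall_le {C : Set V} (hC : G.LocatingDominatingSet C)
    (hmin : ∀ D, G.LocatingDominatingSet D → C.ncard ≤ D.ncard) : G.gammaLD = C.ncard :=
  le_antisymm (Nat.sInf_le ⟨C, hC, rfl⟩)
    (le_csInf ⟨_, C, hC, rfl⟩ fun _ ⟨D, hD, hDm⟩ => hDm ▸ hmin D hD)

theorem locatingDominatingSet_coe_iff [DecidableEq V] [DecidableRel G.Adj] (A : Finset V) :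
    G.LocatingDominatingSet A ↔ (∀ v, ∃ d ∈ A, d = v ∨ G.Adj d v) ∧
      ∀ u ∉ A, ∀ v ∉ A, u ≠ v → ∃ c ∈ A, ¬(G.Adj u c ↔ G.Adj v c) := by
  have trace_eq_iff : ∀ u v, G.neighborSet u ∩ A = G.neighborSet v ∩ A ↔
      ∀ c ∈ A, (G.Adj u c ↔ G.Adj v c) := fun u v => by
    simp only [Set.ext_iff, Set.mem_inter_iff, mem_neighborSet, Finset.mem_coe]
    exact forall_congr' fun c => by by_cases hc : c ∈ A <;> simp [hc]
  simp only [LocatingDominatingSet, DominatingSet, Finset.mem_coe, ne_eq, trace_eq_iff, not_forall,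
    exists_prop]

def apexCopies {W : Type*} (H : SimpleGraph W) (r : W) (ι : Type*) :
    SimpleGraph (Option (ι × W)) where
  Adj
    | none, none => False
    | none, some p | some p, none => p.2 = r
    | some p, some q => p.1 = q.1 ∧ H.Adj p.2 q.2
  symm := ⟨by
    rintro (_ | ⟨i, a⟩) (_ | ⟨j, b⟩) h
    exacts [h, h, h, ⟨h.1.symm, h.2.symm⟩]⟩
  loopless := ⟨by
    rintro (_ | ⟨i, a⟩) h
    exacts [h, H.irrefl h.2]⟩

section apexCopies

variable {W ι : Type*} {H : SimpleGraph W} {r : W}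

@[simp] theorem apexCopies_adj_none_none : ¬(apexCopies H r ι).Adj none none := id

@[simp] theorem apexCopies_adj_none_some {i : ι} {w : W} :
    (apexCopies H r ι).Adj none (some (i, w)) ↔ w = r := Iff.rfl

@[simp] theorem apexCopies_adj_some_none {i : ι} {w : W} :
    (apexCopies H r ι).Adj (some (i, w)) none ↔ w = r := Iff.rfl

@[simp] theorem apexCopies_adj_some_some {i j : ι} {v w : W} :
    (apexCopies H r ι).Adj (some (i, v)) (some (j, w)) ↔ i = j ∧ H.Adj v w := Iff.rfl

theorem apexCopies_connected (hH : H.Connected) : (apexCopies H r ι).Connected := by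
  have reachable_none : ∀ v, (apexCopies H r ι).Reachable none v := by
    rintro (_ | ⟨i, w⟩)
    · rfl
    · let copy : H →g apexCopies H r ι := ⟨fun w => some (i, w), fun h => ⟨rfl, h⟩⟩
      exact (Adj.reachable (by rfl)).trans ((hH.preconnected r w).map copy)
  exact ⟨fun u v => (reachable_none u).symm.trans (reachable_none v)⟩

theorem five_le_egirth_apexCopies
    (h3 : ∀ a b c, H.Adj a b → H.Adj b c → ¬H.Adj c a)
    (h4 : ∀ a b c d, H.Adj a b → H.Adj b c → H.Adj c d → H.Adj d a → a = c ∨ b = d) :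
    5 ≤ (apexCopies H r ι).egirth := by
  apply five_le_egirth_of_no_short_cycles
  · rintro (_ | ⟨i, a⟩) (_ | ⟨j, b⟩) (_ | ⟨l, c⟩) hab hbc hca <;>
      simp only [apexCopies_adj_none_none, apexCopies_adj_none_some, apexCopies_adj_some_none,
        apexCopies_adj_some_some] at hab hbc hca
    case some.some.some => exact h3 _ _ _ hab.2 hbc.2 hca.2
    all_goals subst_vars; simp_all
  · rintro (_ | ⟨i, a⟩) (_ | ⟨j, b⟩) (_ | ⟨l, c⟩) (_ | ⟨m, d⟩) hab hbc hcd hda <;>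
      simp only [apexCopies_adj_none_none, apexCopies_adj_none_some, apexCopies_adj_some_none,
        apexCopies_adj_some_some] at hab hbc hcd hda
    case some.some.some.some =>
      obtain ⟨rfl, hab⟩ := hab; obtain ⟨rfl, hbc⟩ := hbc; obtain ⟨rfl, hcd⟩ := hcd
      rcases h4 _ _ _ _ hab hbc hcd hda.2 with h | h <;> simp [h]
    all_goals subst_vars; simp_all

theorem two_le_ncard_neighborSet_apexCopies [Finite ι] [Finite W] (hι : 2 ≤ Nat.card ι)
    (hH : ∀ w, 2 ≤ (H.neighborSet w).ncard) (v : Option (ι × W)) :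
    2 ≤ ((apexCopies H r ι).neighborSet v).ncard := by
  rcases v with _ | ⟨i, w⟩
  · have : (apexCopies H r ι).neighborSet none = Set.range fun i => some (i, r) := by
      ext (_ | ⟨i, w⟩) <;> simp [eq_comm]
    rwa [this, Set.ncard_range_of_injective fun i j h => by simpa using h]
  · have : (fun w => some (i, w)) '' H.neighborSet w ⊆
        (apexCopies H r ι).neighborSet (some (i, w)) := by
      rintro _ ⟨c, hc, rfl⟩
      exact ⟨rfl, hc⟩
    calc 2 ≤ (H.neighborSet w).ncard := hH w
      _ = ((fun w => some (i, w)) '' H.neighborSet w).ncard :=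
        (Set.ncard_image_of_injective _ fun a b h => by simpa using h).symm
      _ ≤ _ := Set.ncard_le_ncard this

def copySlice (C : Set (Option (ι × W))) (i : ι) : Set W := {w | some (i, w) ∈ C}

@[simp] theorem mem_copySlice {C : Set (Option (ι × W))} {i : ι} {w : W} :
    w ∈ copySlice C i ↔ some (i, w) ∈ C := Iff.rfl

theorem ncard_eq_add_sum_ncard_copySlice [Fintype ι] [Finite W] (C : Set (Option (ι × W))) :
    C.ncard = (C ∩ {none}).ncard + ∑ i, (copySlice C i).ncard := by
  have hsplit : C = (C ∩ {none}) ∪ ⋃ i, (fun w => some (i, w)) '' copySlice C i := by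
    ext (_ | ⟨i, w⟩) <;> simp
  have hdisj : Pairwise fun i j => Disjoint ((fun w => some (i, w)) '' copySlice C i)
      ((fun w => some (j, w)) '' copySlice C j) := by
    intro i j hij
    rw [Set.disjoint_left]
    rintro _ ⟨a, -, rfl⟩ ⟨b, -, h⟩
    exact hij (congrArg Prod.fst (Option.some_injective _ h)).symm
  conv_lhs => rw [hsplit]
  rw [Set.ncard_union_eq (Set.disjoint_left.2 (by rintro _ ⟨-, rfl⟩; simp)),
    Set.ncard_iUnion_of_finite (fun _ => Set.toFinite _) hdisj, finsum_eq_sum_of_fintype]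
  exact congrArg _ <| Finset.sum_congr rfl fun i _ =>
    Set.ncard_image_of_injective _ fun a b h => by simpa using h

theorem locatingDominatingSet_apexCopies [Nontrivial ι] {A : Set W}
    (hA : H.LocatingDominatingSet A) (hr : r ∈ A) :
    (apexCopies H r ι).LocatingDominatingSet (some '' (Set.univ ×ˢ A)) := by
  have mem : ∀ (i : ι) w, some (i, w) ∈ some '' (Set.univ ×ˢ A) ↔ w ∈ A := by simp
  constructor
  · rintro (_ | ⟨i, w⟩)
    · obtain ⟨i⟩ := (inferInstance : Nonempty ι)
      exact ⟨some (i, r), (mem i r).2 hr, Or.inr rfl⟩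
    · obtain ⟨d, hd, h⟩ := hA.1 w
      exact ⟨some (i, d), (mem i d).2 hd, h.imp (by rintro rfl; rfl) fun h => ⟨rfl, h⟩⟩
  · rintro (_ | ⟨i, a⟩) hu (_ | ⟨j, b⟩) hv huv htr
    · exact huv rfl
    · obtain ⟨i, hij⟩ := exists_ne j
      have : some (i, r) ∈ (apexCopies H r ι).neighborSet none ∩ some '' (Set.univ ×ˢ A) :=
        ⟨rfl, (mem i r).2 hr⟩
      rw [htr] at this
      exact hij this.1.1.symm
    · obtain ⟨j, hij⟩ := exists_ne i
      have : some (j, r) ∈ (apexCopies H r ι).neighborSet none ∩ some '' (Set.univ ×ˢ A) :=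
        ⟨rfl, (mem j r).2 hr⟩
      rw [← htr] at this
      exact hij this.1.1.symm
    · by_cases hij : i = j
      · subst hij
        refine hA.2 a ((mem i a).not.1 hu) b ((mem i b).not.1 hv)
          (by rintro rfl; exact huv rfl) ?_
        ext c
        simpa using Set.ext_iff.1 htr (some (i, c))
      · obtain ⟨d, hd, rfl | had⟩ := hA.1 a
        · exact hu ((mem i d).2 hd)
        · have : some (i, d) ∈ (apexCopies H r ι).neighborSet (some (i, a)) ∩
              some '' (Set.univ ×ˢ A) := ⟨⟨rfl, had.symm⟩, (mem i d).2 hd⟩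
          rw [htr] at this
          exact hij this.1.1.symm

/-- What a locating-dominating set of `apexCopies H r ι` leaves on one copy of `H`: `P` dominates
and separates the vertices outside it, helped by the apex, which counts as a neighbour of `r` in
the set exactly when `s` holds. -/
def IsMarkedLocatingDominating (H : SimpleGraph W) (r : W) (s : Prop) (P : Set W) : Prop :=
  (∀ a ∉ P, (∃ c ∈ P, H.Adj a c) ∨ (a = r ∧ s)) ∧
    ∀ a ∉ P, ∀ b ∉ P, a ≠ b → (∀ c ∈ P, (H.Adj a c ↔ H.Adj b c)) →
      ¬((a = r ∧ s) ↔ (b = r ∧ s))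

theorem LocatingDominatingSet.isMarkedLocatingDominating_copySlice {C : Set (Option (ι × W))}
    (hC : (apexCopies H r ι).LocatingDominatingSet C) (i : ι) :
    IsMarkedLocatingDominating H r (none ∈ C) (copySlice C i) := by
  constructor
  · intro a ha
    obtain ⟨_ | ⟨j, c⟩, hd, h | h⟩ := hC.1 (some (i, a))
    · exact absurd h (by simp)
    · exact Or.inr ⟨h, hd⟩
    · obtain ⟨rfl, rfl⟩ := Prod.ext_iff.1 (Option.some_injective _ h)
      exact absurd hd ha
    · obtain ⟨rfl, hca⟩ : j = i ∧ H.Adj c a := h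
      exact Or.inl ⟨c, hd, hca.symm⟩
  · intro a ha b hb hab hsame hmark
    refine hC.2 _ ha _ hb (by simpa using hab) (Set.ext ?_)
    rintro (_ | ⟨j, c⟩)
    · simpa using hmark
    · by_cases hij : i = j
      · subst hij
        by_cases hc : some (i, c) ∈ C
        · simpa [hc] using hsame c hc
        · simp [hc]
      · simp [hij]

end apexCopies

set_option synthInstance.maxSize 1000 in
theorem IsMarkedLocatingDominating.card_cycleGraph_six {s : Prop} {P : Finset (Fin 6)}
    (hP : IsMarkedLocatingDominating (cycleGraph 6) 0 s P) :
    2 ≤ P.card ∧ (P.card ≤ 2 → s ∧ 0 ∉ P ∧ ∀ c ∈ P, ¬(cycleGraph 6).Adj 0 c) := by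
  obtain rfl | rfl : s = True ∨ s = False := by by_cases hs : s <;> simp [hs]
  all_goals revert P; unfold IsMarkedLocatingDominating; decide

theorem LocatingDominatingSet.copySlice_cycleGraph_six {k : ℕ}
    {C : Set (Option (Fin k × Fin 6))}
    (hC : (apexCopies (cycleGraph 6) 0 (Fin k)).LocatingDominatingSet C) (i : Fin k) :
    2 ≤ (copySlice C i).ncard ∧ ((copySlice C i).ncard ≤ 2 → none ∈ C ∧ some (i, 0) ∉ C ∧
      (apexCopies (cycleGraph 6) 0 (Fin k)).neighborSet (some (i, 0)) ∩ C = {none}) := by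
  classical
  have h := hC.isMarkedLocatingDominating_copySlice i
  rw [← Set.coe_toFinset (copySlice C i)] at h
  obtain ⟨h2, hle⟩ := h.card_cycleGraph_six
  rw [Set.ncard_eq_toFinset_card']
  refine ⟨h2, fun hi => ?_⟩
  obtain ⟨hnone, h0, hnb⟩ := hle hi
  refine ⟨hnone, by simpa using h0, ?_⟩
  ext (_ | ⟨j, c⟩)
  · simp [hnone]
  · simp only [Set.mem_inter_iff, mem_neighborSet, apexCopies_adj_some_some,
      Set.mem_singleton_iff, reduceCtorEq, iff_false, not_and, and_imp]
    rintro rfl hadj hc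
    exact hnb c (by simpa using hc) hadj

theorem LocatingDominatingSet.three_mul_le_ncard_of_cycleGraph_six {k : ℕ}
    {C : Set (Option (Fin k × Fin 6))}
    (hC : (apexCopies (cycleGraph 6) 0 (Fin k)).LocatingDominatingSet C) : 3 * k ≤ C.ncard := by
  have hslice := hC.copySlice_cycleGraph_six
  have hunique : ∀ i j, (copySlice C i).ncard ≤ 2 → (copySlice C j).ncard ≤ 2 → i = j := by
    intro i j hi hj
    by_contra hij
    obtain ⟨-, hi0, htri⟩ := (hslice i).2 hi
    obtain ⟨-, hj0, htrj⟩ := (hslice j).2 hj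
    exact hC.2 _ hi0 _ hj0 (by simpa using hij) (htri.trans htrj.symm)
  set small := Finset.univ.filter fun i => (copySlice C i).ncard ≤ 2
  have hsmall : small.card ≤ (C ∩ {none}).ncard := by
    obtain hempty | ⟨i, hi⟩ := small.eq_empty_or_nonempty
    · simp [hempty]
    · have hnone : none ∈ C := ((hslice i).2 (by simpa [small] using hi)).1
      rw [Set.inter_eq_right.2 (Set.singleton_subset_iff.2 hnone), Set.ncard_singleton]
      exact Finset.card_le_one.2 fun a ha b hb =>
        hunique a b (by simpa [small] using ha) (by simpa [small] using hb)
  calc 3 * k = ∑ _i : Fin k, 3 := by simp [mul_comm]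
    _ ≤ ∑ i, ((copySlice C i).ncard + if (copySlice C i).ncard ≤ 2 then 1 else 0) :=
      Finset.sum_le_sum fun i _ => by have := (hslice i).1; split_ifs <;> omega
    _ = ∑ i, (copySlice C i).ncard + small.card := by
      rw [Finset.sum_add_distrib, Finset.sum_boole, Nat.cast_id]
    _ ≤ ∑ i, (copySlice C i).ncard + (C ∩ {none}).ncard := by gcongr
    _ = C.ncard := by rw [add_comm, ncard_eq_add_sum_ncard_copySlice C]

theorem gammaLD_apexCopies_cycleGraph_six {k : ℕ} (hk : 2 ≤ k) :
    (apexCopies (cycleGraph 6) 0 (Fin k)).gammaLD = 3 * k := by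
  have : Nontrivial (Fin k) := Fin.nontrivial_iff_two_le.2 hk
  have hC6 : (cycleGraph 6).LocatingDominatingSet (({0, 2, 4} : Finset (Fin 6)) : Set (Fin 6)) :=
    (locatingDominatingSet_coe_iff _).2 (by decide)
  have hC := locatingDominatingSet_apexCopies (ι := Fin k) (r := 0) hC6 (by simp)
  have hcard : (some '' (Set.univ ×ˢ ↑({0, 2, 4} : Finset (Fin 6))) :
      Set (Option (Fin k × Fin 6))).ncard = 3 * k := by
    rw [Set.ncard_image_of_injective _ (Option.some_injective _), Set.ncard_prod]
    simp [mul_comm]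
  rw [gammaLD_eq_of_forall_le hC fun D hD => hcard ▸ hD.three_mul_le_ncard_of_cycleGraph_six,
    hcard]

end SimpleGraph

/-- Proposition: for every `k ≥ 2` there is a connected graph of order `n = 6k+1`,
girth at least 5, minimum degree at least 2, and location-domination number
`3k = (n-1)/2`. -/
theorem exists_connected_graph_gammaLD_eq_half
    (k : ℕ) (hk : 2 ≤ k) :
    ∃ (V : Type) (inst : Fintype V) (G : SimpleGraph V),
      G.Connected ∧
      @Fintype.card V inst = 6 * k + 1 ∧
      5 ≤ G.egirth ∧
      (∀ v : V, 2 ≤ (G.neighborSet v).ncard) ∧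
      G.gammaLD = 3 * k := by
  have hC6_degree (w : Fin 6) : 2 ≤ ((SimpleGraph.cycleGraph 6).neighborSet w).ncard := by
    rw [SimpleGraph.cycleGraph_neighborSet (n := 4), Set.ncard_pair (by revert w; decide)]
  exact ⟨Option (Fin k × Fin 6), inferInstance, (SimpleGraph.cycleGraph 6).apexCopies 0 (Fin k),
    SimpleGraph.apexCopies_connected SimpleGraph.cycleGraph_connected, by simp [mul_comm],
    SimpleGraph.five_le_egirth_apexCopies (by decide) (by decide),
    SimpleGraph.two_le_ncard_neighborSet_apexCopies (by simpa using hk) hC6_degree,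
    SimpleGraph.gammaLD_apexCopies_cycleGraph_six hk⟩
end

section
/- Let G be a finite simple graph of girth at least 5 containing an induced subgraph P isomorphic to P11 (with x denoting the unique vertex of P of degree 2 in P, i.e. the subdivision vertex), such that every vertex of P other than x has all of its G-neighbours inside P. Then every locating-dominating set D of G satisfies |D ∩ V(P)| ≥ 4. -/
/-- The graph `P11`: the Petersen graph (outer vertices `0,…,4`, inner vertices
`5,…,9`, spokes `i — i+5`) with the outer edge `{0,1}` subdivided once by the new
vertex `10`, which is the unique vertex of degree 2. -/
def P11 : SimpleGraph (Fin 11) :=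
  SimpleGraph.fromRel (fun a b =>
    (a, b) ∈ ([(0, 10), (1, 10), (1, 2), (2, 3), (3, 4), (4, 0),
               (5, 7), (6, 8), (7, 9), (8, 5), (9, 6),
               (0, 5), (1, 6), (2, 7), (3, 8), (4, 9)] : List (Fin 11 × Fin 11)))

/-- Neighbourhood bitmasks of `P11`. -/
def P11nbrs : Fin 11 → Nat :=
  ![0b10000110000, 0b10001000100, 0b10001010, 0b100010100, 0b1000001001,
    0b110000001, 0b1100000010, 0b1000100100, 0b1101000, 0b11010000, 0b11]

/-- Boolean adjacency of `P11`. -/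
def P11adjB (a b : Fin 11) : Bool := (P11nbrs a).testBit b.val

instance : DecidableRel P11.Adj := fun a b =>
  decidable_of_iff _ (SimpleGraph.fromRel_adj _ a b).symm

lemma P11_adj_iff : ∀ a b : Fin 11, P11.Adj a b ↔ P11adjB a b = true := by decide

set_option maxHeartbeats 2000000 in
set_option synthInstance.maxHeartbeats 1000000 in
set_option synthInstance.maxSize 1024 in
set_option maxRecDepth 10000 in
lemma P11_key3 : ∀ a b c : Fin 11,
    (∀ v : Fin 11, v ≠ 10 → (v = a ∨ v = b ∨ v = c) ∨
      (P11adjB a v ∨ P11adjB b v ∨ P11adjB c v)) →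
    (∀ u : Fin 11, u ≠ a → u ≠ b → u ≠ c → ∀ v : Fin 11, v ≠ a → v ≠ b → v ≠ c →
      u ≠ 10 → v ≠ 10 → u ≠ v →
      (P11adjB a u ≠ P11adjB a v ∨ P11adjB b u ≠ P11adjB b v ∨ P11adjB c u ≠ P11adjB c v)) →
    False := by decide

/-- Lemma: if a graph of girth at least 5 contains an induced copy of `P11` whose
vertices other than the subdivision vertex `x` have all their neighbours inside the
copy, then any locating-dominating set contains at least 4 vertices of the copy. -/
theorem locatingDominating_inter_P11_ge_four
    {V : Type*} [Fintype V] (G : SimpleGraph V) (hg : 5 ≤ G.egirth)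
    (P : Set V) (x : V) (hx : x ∈ P)
    (φ : G.induce P ≃g P11) (hφx : φ ⟨x, hx⟩ = (10 : Fin 11))
    (hclosed : ∀ v ∈ P, v ≠ x → ∀ w : V, G.Adj v w → w ∈ P)
    (D : Set V) (hD : G.LocatingDominatingSet D) :
    4 ≤ (D ∩ P).ncard := by
  classical
  -- the trace of `D` on the copy, transported to `Fin 11`
  set T : Finset (Fin 11) :=
    Finset.univ.filter (fun i => ((φ.symm i : P) : V) ∈ D) with hT
  -- transport of adjacency
  have hadj : ∀ (p q : P), G.Adj (p : V) (q : V) ↔ P11.Adj (φ p) (φ q) := by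
    intro p q
    exact Iff.symm φ.map_adj_iff
  have hsymmval : ∀ i : Fin 11, φ ⟨((φ.symm i : P) : V), (φ.symm i : P).2⟩ = i := by
    intro i
    have : (⟨((φ.symm i : P) : V), (φ.symm i : P).2⟩ : P) = φ.symm i := rfl
    rw [this]; exact φ.apply_symm_apply i
  have hne10 : ∀ i : Fin 11, i ≠ 10 → ((φ.symm i : P) : V) ≠ x := by
    intro i hi h
    apply hi
    rw [← hφx]
    have : (φ.symm i : P) = ⟨x, hx⟩ := Subtype.ext h
    rw [← this, φ.apply_symm_apply]
  -- first: 4 ≤ T.card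
  have hTcard : 4 ≤ T.card := by
    by_contra hlt
    push_neg at hlt
    have h3 : T.card ≤ 3 := by omega
    obtain ⟨U, hTU, hU3⟩ :=
      Finset.exists_superset_card_eq h3 (by simp)
    obtain ⟨a, b, c, -, -, -, hUabc⟩ := Finset.card_eq_three.mp hU3
    subst hUabc
    have hmem : ∀ i ∈ T, i = a ∨ i = b ∨ i = c := by
      intro i hi
      have := hTU hi
      simpa using this
    have hTdef : ∀ i : Fin 11, i ∈ T ↔ ((φ.symm i : P) : V) ∈ D := by
      intro i; simp [hT]
    apply P11_key3 a b c
    · -- domination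
      intro i hi
      set v : V := ((φ.symm i : P) : V) with hv
      have hvP : v ∈ P := (φ.symm i : P).2
      have hvx : v ≠ x := hne10 i hi
      obtain ⟨d, hdD, hdv⟩ := hD.1 v
      rcases hdv with rfl | hadj'
      · exact Or.inl (hmem i ((hTdef i).mpr hdD))
      · have hdP : d ∈ P := hclosed v hvP hvx d hadj'.symm
        set j : Fin 11 := φ ⟨d, hdP⟩ with hj
        have hjT : j ∈ T := by
          rw [hTdef]
          have : (φ.symm j : P) = ⟨d, hdP⟩ := by rw [hj, φ.symm_apply_apply]
          rw [this]; exact hdD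
        have hadjji : P11adjB j i = true := by
          rw [← P11_adj_iff]
          have := (hadj ⟨d, hdP⟩ ⟨v, hvP⟩).mp hadj'
          rwa [hsymmval i] at this
        rcases hmem j hjT with rfl | rfl | rfl
        · exact Or.inr (Or.inl hadjji)
        · exact Or.inr (Or.inr (Or.inl hadjji))
        · exact Or.inr (Or.inr (Or.inr hadjji))
    · -- location
      intro i hia hib hic j hja hjb hjc hi10 hj10 hij
      set u : V := ((φ.symm i : P) : V) with hu
      set v : V := ((φ.symm j : P) : V) with hv
      have huP : u ∈ P := (φ.symm i : P).2
      have hvP : v ∈ P := (φ.symm j : P).2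
      have hux : u ≠ x := hne10 i hi10
      have hvx : v ≠ x := hne10 j hj10
      have huD : u ∉ D := by
        intro h
        rcases hmem i ((hTdef i).mpr h) with rfl | rfl | rfl
        exacts [hia rfl, hib rfl, hic rfl]
      have hvD : v ∉ D := by
        intro h
        rcases hmem j ((hTdef j).mpr h) with rfl | rfl | rfl
        exacts [hja rfl, hjb rfl, hjc rfl]
      have huv : u ≠ v := by
        intro h
        apply hij
        have : (φ.symm i : P) = (φ.symm j : P) := Subtype.ext h
        have := congrArg φ this
        rwa [φ.apply_symm_apply, φ.apply_symm_apply] at this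
      have hne := hD.2 u huD v hvD huv
      -- extract a distinguishing vertex
      have : ∃ w : V, (w ∈ G.neighborSet u ∩ D ∧ w ∉ G.neighborSet v ∩ D) ∨
          (w ∈ G.neighborSet v ∩ D ∧ w ∉ G.neighborSet u ∩ D) := by
        by_contra h
        apply hne
        ext w
        constructor
        · intro hw
          by_contra hw'
          exact h ⟨w, Or.inl ⟨hw, hw'⟩⟩
        · intro hw
          by_contra hw'
          exact h ⟨w, Or.inr ⟨hw, hw'⟩⟩
      obtain ⟨w, hw⟩ := this
      -- symmetric handling
      have main : ∀ (p q : Fin 11), p ≠ 10 →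
          w ∈ G.neighborSet ((φ.symm p : P) : V) ∩ D →
          w ∉ G.neighborSet ((φ.symm q : P) : V) ∩ D →
          ∃ s ∈ T, P11adjB s p = true ∧ P11adjB s q = false := by
        intro p q hp10 hwp hwq
        obtain ⟨hadjp, hwD⟩ := hwp
        have hpx : ((φ.symm p : P) : V) ≠ x := hne10 p hp10
        have hwP : w ∈ P := hclosed _ (φ.symm p : P).2 hpx w hadjp
        refine ⟨φ ⟨w, hwP⟩, ?_, ?_, ?_⟩
        · rw [hTdef]
          have : (φ.symm (φ ⟨w, hwP⟩) : P) = ⟨w, hwP⟩ := φ.symm_apply_apply _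
          rw [this]; exact hwD
        · rw [← P11_adj_iff]
          have := (hadj ⟨w, hwP⟩ ⟨_, (φ.symm p : P).2⟩).mp hadjp.symm
          rwa [hsymmval p] at this
        · by_contra hb
          have hb' : P11adjB (φ ⟨w, hwP⟩) q = true := by
            cases h : P11adjB (φ ⟨w, hwP⟩) q
            · exact (hb h).elim
            · rfl
          have : P11.Adj (φ ⟨w, hwP⟩) q := (P11_adj_iff _ _).mpr hb'
          rw [← hsymmval q] at this
          have := (hadj ⟨w, hwP⟩ ⟨_, (φ.symm q : P).2⟩).mpr this
          exact hwq ⟨this.symm, hwD⟩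
      have final : ∃ s ∈ T, P11adjB s i ≠ P11adjB s j := by
        rcases hw with ⟨h1, h2⟩ | ⟨h1, h2⟩
        · obtain ⟨s, hs, e1, e2⟩ := main i j hi10 h1 h2
          exact ⟨s, hs, by rw [e1, e2]; simp⟩
        · obtain ⟨s, hs, e1, e2⟩ := main j i hj10 h1 h2
          exact ⟨s, hs, by rw [e1, e2]; simp⟩
      obtain ⟨s, hs, hsne⟩ := final
      rcases hmem s hs with rfl | rfl | rfl
      · exact Or.inl hsne
      · exact Or.inr (Or.inl hsne)
      · exact Or.inr (Or.inr hsne)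
  -- second: T.card ≤ (D ∩ P).ncard
  have hinj : Set.InjOn (fun i : Fin 11 => ((φ.symm i : P) : V)) T := by
    intro i _ j _ h
    have : (φ.symm i : P) = (φ.symm j : P) := Subtype.ext h
    have := congrArg φ this
    rwa [φ.apply_symm_apply, φ.apply_symm_apply] at this
  have hsub : ((T.image (fun i : Fin 11 => ((φ.symm i : P) : V)) : Finset V) : Set V)
      ⊆ D ∩ P := by
    intro w hw
    simp only [Finset.coe_image, Set.mem_image, Finset.mem_coe] at hw
    obtain ⟨i, hi, rfl⟩ := hw
    have : ((φ.symm i : P) : V) ∈ D := by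
      simpa [hT] using hi
    exact ⟨this, (φ.symm i : P).2⟩
  calc 4 ≤ T.card := hTcard
    _ = (T.image (fun i : Fin 11 => ((φ.symm i : P) : V))).card :=
        (Finset.card_image_of_injOn hinj).symm
    _ = ((T.image (fun i : Fin 11 => ((φ.symm i : P) : V)) : Finset V) : Set V).ncard :=
        (Set.ncard_coe_finset _).symm
    _ ≤ (D ∩ P).ncard := Set.ncard_le_ncard hsub (Set.toFinite _)
end

section
/- For every integer k ≥ 2 there exists a connected finite simple identifiable graph G of order n = 5k + 1, with girth at least 5, minimum degree at least 2, and identifying code number γID(G) = 3k = (3/5)·(n − 1). (In particular, there are infinitely many connected graphs of girth at least 5 and minimum degree at least 2 attaining γID(G) = (3/5)·(n − 1).) -/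
/-!
Join a hub to vertex `0` of each of `k` disjoint five-cycles. Every short cycle would have to
stay inside one five-cycle, so the girth is 5; a triangle-free graph of minimum degree 2 is
identifiable. Vertices `0, 1, 2` of each five-cycle form an identifying code of size `3k`.
Conversely, the closed neighbourhoods of vertices `1, …, 4` of a five-cycle lie inside it, so an
identifying code gives these four vertices distinct nonempty traces on that cycle; with `m` code
vertices there, `4 < 2 ^ m`, hence `m ≥ 3` on each of the `k` disjoint cycles.
-/

open Function SimpleGraph

lemma Set.mul_le_ncard_of_pairwise_disjoint {α ι : Type*} [Fintype ι] {s : Set α}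
    (hs : s.Finite) {t : ι → Set α} (ht : Pairwise (Disjoint on t)) {m : ℕ}
    (h : ∀ i, m ≤ (s ∩ t i).ncard) : Fintype.card ι * m ≤ s.ncard :=
  calc Fintype.card ι * m = ∑ _i : ι, m := by simp
    _ ≤ ∑ i, (s ∩ t i).ncard := Finset.sum_le_sum fun i _ => h i
    _ = (⋃ i, s ∩ t i).ncard := by
      rw [Set.ncard_iUnion_of_finite (fun _ => hs.inter_of_left _)
        (fun i j hij => (ht hij).mono Set.inter_subset_right Set.inter_subset_right),
        finsum_eq_sum_of_fintype]
    _ ≤ s.ncard := Set.ncard_le_ncard (Set.iUnion_subset fun _ => Set.inter_subset_left) hs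

namespace SimpleGraph

variable {V : Type*} {G : SimpleGraph V}

lemma five_le_egirth_of_forall_not_adj
    (h3 : ∀ a b c, G.Adj a b → G.Adj b c → ¬G.Adj c a)
    (h4 : ∀ a b c d, a ≠ c → b ≠ d → G.Adj a b → G.Adj b c → G.Adj c d → ¬G.Adj d a) :
    5 ≤ G.egirth := by
  rw [le_egirth]
  intro a w hw
  match w, hw.three_le_length with
  | .cons hab (.cons hbc (.cons hca .nil)), _ => exact absurd hca (h3 _ _ _ hab hbc)
  | .cons hab (.cons hbc (.cons hcd (.cons hda .nil))), _ =>
    have hnd := hw.support_nodup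
    simp only [Walk.support_cons, Walk.support_nil, List.tail_cons, List.nodup_cons,
      List.mem_cons, List.not_mem_nil, or_false] at hnd
    exact absurd hda (h4 _ _ _ _ (fun h => hnd.2.1 (Or.inr h.symm))
      (fun h => hnd.1 (Or.inr (Or.inl h))) hab hbc hcd)
  | .cons _ (.cons _ (.cons _ (.cons _ (.cons _ w)))), _ =>
    norm_cast
    simp only [Walk.length_cons]
    omega

/-- Two distinct vertices with equal closed neighbourhoods are adjacent, and any further
neighbour of one of them would close a triangle. -/
lemma identifiable_of_forall_not_adj
    (h3 : ∀ a b c, G.Adj a b → G.Adj b c → ¬G.Adj c a)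
    (hdeg : ∀ v, 2 ≤ (G.neighborSet v).ncard) : G.Identifiable := by
  intro u v huv
  by_contra hne
  have hvu : G.Adj v u := by
    have : u ∈ insert v (G.neighborSet v) := huv ▸ Set.mem_insert u _
    exact this.resolve_left hne
  obtain ⟨w, hw, hwv⟩ : ∃ w ∈ G.neighborSet u, w ≠ v := by
    by_contra! h
    have := Set.ncard_le_ncard (show G.neighborSet u ⊆ {v} from h)
    grind [Set.ncard_singleton]
  have : w ∈ insert v (G.neighborSet v) := huv ▸ Set.mem_insert_of_mem u hw
  exact h3 v u w hvu hw (this.resolve_left hwv).symm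

/-- Vertices whose closed neighbourhoods lie in `T` are separated by `C ∩ T`, through distinct
nonempty subsets. -/
lemma IdentifyingCode.ncard_lt_two_pow {C S T : Set V} (hC : G.IdentifyingCode C)
    (hT : T.Finite) (hST : ∀ v ∈ S, insert v (G.neighborSet v) ⊆ T) :
    S.ncard < 2 ^ (C ∩ T).ncard := by
  have hCT : (C ∩ T).Finite := hT.inter_of_right C
  have hmaps : ∀ v ∈ S, insert v (G.neighborSet v) ∩ C ∈ 𝒫 (C ∩ T) \ {∅} := by
    intro v hv
    obtain ⟨d, hdC, hd⟩ := hC.1 v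
    refine ⟨fun w hw => ⟨hw.2, hST v hv hw.1⟩, ?_⟩
    refine Set.nonempty_iff_ne_empty.mp ⟨d, ?_, hdC⟩
    rcases hd with rfl | hd
    exacts [Set.mem_insert _ _, Or.inr hd.symm]
  have hinj : Set.InjOn (fun v => insert v (G.neighborSet v) ∩ C) S :=
    fun u _ v _ huv => by_contra fun hne => hC.2 u v hne huv
  calc S.ncard ≤ (𝒫 (C ∩ T) \ {∅}).ncard :=
        Set.ncard_le_ncard_of_injOn _ hmaps hinj hCT.powerset.sdiff
    _ < 2 ^ (C ∩ T).ncard := by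
        rw [Set.ncard_sdiff_singleton_of_mem (Set.mem_powerset (Set.empty_subset _)),
          Set.ncard_powerset _ hCT]
        exact Nat.sub_lt (Nat.two_pow_pos _) one_pos

lemma gammaID_eq_ncard {C₀ : Set V} (hC₀ : G.IdentifyingCode C₀)
    (h : ∀ C, G.IdentifyingCode C → C₀.ncard ≤ C.ncard) : G.gammaID = C₀.ncard :=
  IsLeast.csInf_eq ⟨⟨C₀, hC₀, rfl⟩, by rintro _ ⟨C, hC, rfl⟩; exact h C hC⟩

end SimpleGraph

/-- `none` is the hub and `some (i, j)` is vertex `j` of the `i`-th five-cycle. -/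
def hubCycles (k : ℕ) : SimpleGraph (Option (Fin k × Fin 5)) where
  Adj u v := match u, v with
    | none, none => False
    | none, some p | some p, none => p.2 = 0
    | some p, some q => p.1 = q.1 ∧ (q.2 = p.2 + 1 ∨ p.2 = q.2 + 1)
  symm := ⟨by rintro (_ | ⟨i, j⟩) (_ | ⟨i', j'⟩) <;> simp [eq_comm, or_comm]⟩
  loopless := ⟨by rintro (_ | ⟨i, j⟩) <;> simp⟩

namespace hubCycles

variable {k : ℕ} {i i' : Fin k} {j j' l : Fin 5} {p : Fin k × Fin 5}

@[simp] lemma adj_none_some : (hubCycles k).Adj none (some p) ↔ p.2 = 0 := .rfl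

@[simp] lemma adj_some_none : (hubCycles k).Adj (some p) none ↔ p.2 = 0 := .rfl

@[simp] lemma adj_some_some :
    (hubCycles k).Adj (some (i, j)) (some (i', j')) ↔ i = i' ∧ (j' = j + 1 ∨ j = j' + 1) :=
  .rfl

lemma not_adj_of_adj_of_adj :
    ∀ a b c, (hubCycles k).Adj a b → (hubCycles k).Adj b c → ¬(hubCycles k).Adj c a := by
  rintro (_ | ⟨i, j⟩) (_ | ⟨i', j'⟩) (_ | ⟨i'', j''⟩) <;> simp <;> fin_omega

lemma not_adj_of_adj_of_adj_of_adj :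
    ∀ a b c d, a ≠ c → b ≠ d → (hubCycles k).Adj a b → (hubCycles k).Adj b c →
      (hubCycles k).Adj c d → ¬(hubCycles k).Adj d a := by
  rintro (_ | ⟨i, j⟩) (_ | ⟨i', j'⟩) (_ | ⟨i'', j''⟩) (_ | ⟨i''', j'''⟩) <;> simp <;> grind

lemma connected : (hubCycles k).Connected := by
  refine (connected_iff_exists_forall_reachable _).mpr ⟨none, ?_⟩
  rintro (_ | ⟨i, j⟩)
  · rfl
  induction j using Fin.induction with
  | zero => exact Adj.reachable (by simp)
  | succ m ih => exact ih.trans (Adj.reachable (by simp [Fin.coeSucc_eq_succ]))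

lemma two_le_ncard_neighborSet (hk : 2 ≤ k) (v : Option (Fin k × Fin 5)) :
    2 ≤ ((hubCycles k).neighborSet v).ncard := by
  rw [Nat.succ_le_iff, Set.one_lt_ncard_iff]
  rcases v with _ | ⟨i, j⟩
  · exact ⟨some (⟨0, by omega⟩, 0), some (⟨1, by omega⟩, 0), by simp, by simp, by simp⟩
  · exact ⟨some (i, j + 1), some (i, j - 1), by simp, by simp, by simp; fin_omega⟩

lemma mem_insert_neighborSet_some :
    some (i', l) ∈ insert (some (i, j)) ((hubCycles k).neighborSet (some (i, j))) ↔
      i = i' ∧ (l = j ∨ l = j + 1 ∨ j = l + 1) := by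
  simp; grind

def cycle (i : Fin k) : Set (Option (Fin k × Fin 5)) := Set.range fun j => some (i, j)

lemma pairwise_disjoint_cycle : Pairwise (Disjoint on (cycle (k := k))) := by
  intro i i' hii'
  rw [Function.onFun, Set.disjoint_left]
  rintro _ ⟨j, rfl⟩ ⟨j', h⟩
  simp_all

lemma insert_neighborSet_some_subset_cycle (hj : j ≠ 0) :
    insert (some (i, j)) ((hubCycles k).neighborSet (some (i, j))) ⊆ cycle i := by
  rintro (_ | ⟨i', l⟩) h
  · simp_all
  · obtain ⟨rfl, -⟩ := mem_insert_neighborSet_some.mp h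
    exact ⟨l, rfl⟩

def code (k : ℕ) : Set (Option (Fin k × Fin 5)) := Option.some '' (Set.univ ×ˢ {0, 1, 2})

@[simp] lemma some_mem_code : some (i, j) ∈ code k ↔ j.val < 3 := by
  simp [code]; fin_omega

lemma ncard_code : (code k).ncard = 3 * k := by
  rw [code, Set.ncard_image_of_injective _ (Option.some_injective _), Set.ncard_prod]
  simp [mul_comm]

/- The next two facts say that `{0, 1, 2}` is an identifying code of the five-cycle. -/

lemma exists_lt_three_eq_or_adj (j : Fin 5) :
    ∃ l : Fin 5, l.val < 3 ∧ (l = j ∨ l = j + 1 ∨ j = l + 1) := by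
  revert j; decide

lemma eq_of_forall_lt_three_eq_or_adj_iff :
    (∀ l : Fin 5, l.val < 3 →
      ((l = j ∨ l = j + 1 ∨ j = l + 1) ↔ (l = j' ∨ l = j' + 1 ∨ j' = l + 1))) → j = j' := by
  revert j j'; decide

lemma eq_of_inter_code_eq
    (h : insert (some (i, j)) ((hubCycles k).neighborSet (some (i, j))) ∩ code k =
      insert (some (i', j')) ((hubCycles k).neighborSet (some (i', j'))) ∩ code k) :
    i = i' ∧ j = j' := by
  obtain ⟨l, hl, hjl⟩ := exists_lt_three_eq_or_adj j
  have hmem : some (i, l) ∈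
      insert (some (i, j)) ((hubCycles k).neighborSet (some (i, j))) ∩ code k :=
    ⟨mem_insert_neighborSet_some.mpr ⟨rfl, hjl⟩, some_mem_code.mpr hl⟩
  obtain ⟨rfl, -⟩ := mem_insert_neighborSet_some.mp (h ▸ hmem).1
  refine ⟨rfl, eq_of_forall_lt_three_eq_or_adj_iff fun l hl => ?_⟩
  simpa [mem_insert_neighborSet_some, hl] using congrArg (some (i', l) ∈ ·) h

lemma inter_code_none_ne_some (hk : 2 ≤ k) (i : Fin k) (j : Fin 5) :
    insert none ((hubCycles k).neighborSet none) ∩ code k ≠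
      insert (some (i, j)) ((hubCycles k).neighborSet (some (i, j))) ∩ code k := by
  have : Nontrivial (Fin k) := Fin.nontrivial_iff_two_le.mpr hk
  obtain ⟨i', hi'⟩ := exists_ne i
  intro h
  have hmem : some (i', 0) ∈ insert none ((hubCycles k).neighborSet none) ∩ code k := by simp
  exact hi' (mem_insert_neighborSet_some.mp (h ▸ hmem).1).1.symm

lemma identifyingCode_code (hk : 2 ≤ k) : (hubCycles k).IdentifyingCode (code k) := by
  refine ⟨?_, ?_⟩
  · rintro (_ | ⟨i, j⟩)
    · exact ⟨some (⟨0, by omega⟩, 0), by simp, Or.inr (by simp)⟩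
    · obtain ⟨l, hl, hjl⟩ := exists_lt_three_eq_or_adj j
      exact ⟨some (i, l), by simpa, by simp; grind⟩
  · rintro (_ | ⟨i, j⟩) (_ | ⟨i', j'⟩) huv h
    · exact huv rfl
    · exact inter_code_none_ne_some hk i' j' h
    · exact inter_code_none_ne_some hk i j h.symm
    · obtain ⟨rfl, rfl⟩ := eq_of_inter_code_eq h
      exact huv rfl

lemma three_le_ncard_inter_cycle {C : Set (Option (Fin k × Fin 5))}
    (hC : (hubCycles k).IdentifyingCode C) (i : Fin k) : 3 ≤ (C ∩ cycle i).ncard := by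
  set S := (fun j => some (i, j)) '' ({0}ᶜ : Set (Fin 5))
  have hS : S.ncard = 4 := by
    rw [Set.ncard_image_of_injective _ (fun _ _ h => by simpa using h), Set.ncard_compl]
    simp
  have h4 := hC.ncard_lt_two_pow (S := S) (Set.toFinite (cycle i))
    (by rintro _ ⟨j, hj, rfl⟩; exact insert_neighborSet_some_subset_cycle hj)
  rw [hS] at h4
  exact (Nat.pow_lt_pow_iff_right (by norm_num : 1 < 2)).mp h4

lemma three_mul_le_ncard {C : Set (Option (Fin k × Fin 5))}
    (hC : (hubCycles k).IdentifyingCode C) : 3 * k ≤ C.ncard := by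
  simpa [mul_comm] using Set.mul_le_ncard_of_pairwise_disjoint (Set.toFinite C)
    pairwise_disjoint_cycle (three_le_ncard_inter_cycle hC)

end hubCycles

/-- Proposition: for every `k ≥ 2` there is a connected identifiable graph of order
`n = 5k+1`, girth at least 5, minimum degree at least 2, and identifying code
number `3k = (3/5)·(n-1)`. -/
theorem exists_connected_graph_gammaID_eq_three_fifths
    (k : ℕ) (hk : 2 ≤ k) :
    ∃ (V : Type) (inst : Fintype V) (G : SimpleGraph V),
      G.Connected ∧
      G.Identifiable ∧
      @Fintype.card V inst = 5 * k + 1 ∧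
      5 ≤ G.egirth ∧
      (∀ v : V, 2 ≤ (G.neighborSet v).ncard) ∧
      G.gammaID = 3 * k := by
  refine ⟨_, inferInstance, hubCycles k, hubCycles.connected,
    identifiable_of_forall_not_adj hubCycles.not_adj_of_adj_of_adj
      (hubCycles.two_le_ncard_neighborSet hk),
    by simp [mul_comm],
    five_le_egirth_of_forall_not_adj hubCycles.not_adj_of_adj_of_adj
      hubCycles.not_adj_of_adj_of_adj_of_adj,
    hubCycles.two_le_ncard_neighborSet hk, ?_⟩
  rw [gammaID_eq_ncard (hubCycles.identifyingCode_code hk), hubCycles.ncard_code]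
  exact fun C hC => hubCycles.ncard_code ▸ hubCycles.three_mul_le_ncard hC
end

section
/- Let G be a finite simple identifiable graph of girth at least 5 containing an induced subgraph P isomorphic to P11 (with x denoting the unique vertex of P of degree 2 in P, i.e. the subdivision vertex), such that every vertex of P other than x has all of its G-neighbours inside P. If C is an identifying code of G with |C ∩ V(P)| = 4, then x is dominated only by vertices outside V(P); that is, no vertex of N[x] ∩ C lies in V(P). -/
theorem Set.ncard_preimage_eq_ncard_inter_range {α β : Type*} {f : α → β} (hf : f.Injective)
    (s : Set β) : (f ⁻¹' s).ncard = (s ∩ Set.range f).ncard := by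
  rw [← Set.preimage_inter_range,
    Set.ncard_preimage_of_injective_subset_range hf Set.inter_subset_right]

namespace SimpleGraph

variable {V W : Type*} {G : SimpleGraph V} {H : SimpleGraph W} {C S : Set V}

def IdentifiesOn (G : SimpleGraph V) (C S : Set V) : Prop :=
  (∀ v ∈ S, ∃ c ∈ C, c = v ∨ G.Adj c v) ∧
    ∀ u ∈ S, ∀ v ∈ S, u ≠ v → ∃ c ∈ C, ¬((c = u ∨ G.Adj u c) ↔ (c = v ∨ G.Adj v c))

theorem IdentifyingCode.identifiesOn (hC : G.IdentifyingCode C) (S : Set V) :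
    G.IdentifiesOn C S := by
  refine ⟨fun v _ => hC.1 v, fun u _ v _ huv => ?_⟩
  by_contra! hsame
  apply hC.2 u v huv
  ext c
  simp only [Set.mem_inter_iff, Set.mem_insert_iff, mem_neighborSet]
  exact ⟨fun ⟨hcu, hc⟩ => ⟨(hsame c hc).1 hcu, hc⟩, fun ⟨hcv, hc⟩ => ⟨(hsame c hc).2 hcv, hc⟩⟩

theorem IdentifiesOn.comap (f : H ↪g G) (h : G.IdentifiesOn C S)
    (hclosed : ∀ v, f v ∈ S → ∀ w, G.Adj (f v) w → w ∈ Set.range f) :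
    H.IdentifiesOn (f ⁻¹' C) (f ⁻¹' S) := by
  have mem_range {v : W} (hv : f v ∈ S) {c : V} (hc : c = f v ∨ G.Adj (f v) c) :
      c ∈ Set.range f := hc.elim (fun h => ⟨v, h.symm⟩) (hclosed v hv c)
  have closedNbhd_iff (u c : W) : (f c = f u ∨ G.Adj (f u) (f c)) ↔ (c = u ∨ H.Adj u c) := by
    rw [f.injective.eq_iff, f.map_adj_iff]
  refine ⟨fun v hv => ?_, fun u hu v hv huv => ?_⟩
  · obtain ⟨c, hcC, hc⟩ := h.1 _ hv
    obtain ⟨c, rfl⟩ := mem_range hv (hc.imp id (·.symm))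
    exact ⟨c, hcC, by rwa [f.injective.eq_iff, f.map_adj_iff] at hc⟩
  · obtain ⟨c, hcC, hc⟩ := h.2 _ hu _ hv (f.injective.ne huv)
    have hcr : c ∈ Set.range f := by
      by_cases hcu : c = f u ∨ G.Adj (f u) c
      · exact mem_range hu hcu
      · exact mem_range hv (by tauto)
    obtain ⟨c, rfl⟩ := hcr
    exact ⟨c, hcC, by rwa [closedNbhd_iff, closedNbhd_iff] at hc⟩

end SimpleGraph

-- Listing the four code vertices in increasing order keeps the search to `C(11, 4)` cases.
set_option synthInstance.maxSize 1000 in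
theorem P11.notMem_closedNbhd_ten_of_identifiesOn_of_lt :
    ∀ a b c d : Fin 11, a < b → b < c → c < d →
      P11.IdentifiesOn ↑({a, b, c, d} : Finset (Fin 11)) {10}ᶜ →
      ∀ e ∈ ({a, b, c, d} : Finset (Fin 11)), ¬(e = 10 ∨ P11.Adj 10 e) := by
  simp only [SimpleGraph.IdentifiesOn, Finset.mem_coe, Set.mem_compl_iff, Set.mem_singleton_iff]
  decide

theorem P11.notMem_closedNbhd_ten_of_identifiesOn {T : Set (Fin 11)} (hT : T.ncard = 4)
    (h : P11.IdentifiesOn T {10}ᶜ) : ∀ e ∈ T, ¬(e = 10 ∨ P11.Adj 10 e) := by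
  lift T to Finset (Fin 11) using T.toFinite
  rw [Set.ncard_coe_finset] at hT
  set f := T.orderEmbOfFin hT
  have hTf : T = {f 0, f 1, f 2, f 3} := by
    rw [← Finset.coe_inj, ← Finset.range_orderEmbOfFin T hT]
    ext e
    simp only [Set.mem_range, Finset.coe_insert, Finset.coe_singleton, Set.mem_insert_iff,
      Set.mem_singleton_iff]
    constructor
    · rintro ⟨i, rfl⟩
      fin_cases i <;> simp [f]
    · rintro (rfl | rfl | rfl | rfl) <;> exact ⟨_, rfl⟩
  rw [hTf] at h ⊢
  exact P11.notMem_closedNbhd_ten_of_identifiesOn_of_lt _ _ _ _ (f.strictMono (by decide))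
    (f.strictMono (by decide)) (f.strictMono (by decide)) h

theorem identifyingCode_inter_P11_eq_four_x_dominated_outside_general
    {V : Type*} (G : SimpleGraph V)
    (P : Set V) (x : V) (hx : x ∈ P)
    (φ : G.induce P ≃g P11) (hφx : φ ⟨x, hx⟩ = (10 : Fin 11))
    (hclosed : ∀ v ∈ P, v ≠ x → ∀ w : V, G.Adj v w → w ∈ P)
    (C : Set V) (hC : G.IdentifyingCode C) (hcard : (C ∩ P).ncard = 4) :
    ∀ v ∈ insert x (G.neighborSet x) ∩ C, v ∉ P := by
  set f : P11 ↪g G := (SimpleGraph.Embedding.induce P).comp φ.symm.toRelEmbedding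
  have hf10 : f 10 = x := by simp [f, ← hφx]
  have hrange : Set.range f = P := by
    ext v
    refine ⟨fun ⟨w, hw⟩ => hw ▸ (φ.symm w).2, fun hv => ⟨φ ⟨v, hv⟩, by simp [f]⟩⟩
  have hcode : P11.IdentifiesOn (f ⁻¹' C) {10}ᶜ := by
    have hpre : f ⁻¹' {x}ᶜ = {10}ᶜ := by
      ext w
      simp [← hf10, f.injective.eq_iff]
    rw [← hpre]
    refine (hC.identifiesOn {x}ᶜ).comap f fun v hv w hvw => ?_
    rw [hrange]
    exact hclosed _ (hrange ▸ Set.mem_range_self v) hv w hvw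
  have hcard' : (f ⁻¹' C).ncard = 4 := by
    rw [Set.ncard_preimage_eq_ncard_inter_range f.injective, hrange, hcard]
  rintro v ⟨hvx, hvC⟩ hvP
  obtain ⟨e, rfl⟩ : v ∈ Set.range f := hrange ▸ hvP
  apply P11.notMem_closedNbhd_ten_of_identifiesOn hcard' hcode e hvC
  rw [← hf10] at hvx
  simpa only [Set.mem_insert_iff, SimpleGraph.mem_neighborSet, f.injective.eq_iff,
    f.map_adj_iff] using hvx

/-- Lemma: if an identifiable graph of girth at least 5 contains an induced copy of
`P11` (with subdivision vertex `x`) whose vertices other than `x` have all their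
neighbours inside the copy, and `C` is an identifying code meeting the copy in
exactly 4 vertices, then `x` is dominated only by vertices outside the copy:
no vertex of `N[x] ∩ C` lies in the copy. -/
theorem identifyingCode_inter_P11_eq_four_x_dominated_outside
    {V : Type*} [Fintype V] (G : SimpleGraph V) (hid : G.Identifiable)
    (hg : 5 ≤ G.egirth)
    (P : Set V) (x : V) (hx : x ∈ P)
    (φ : G.induce P ≃g P11) (hφx : φ ⟨x, hx⟩ = (10 : Fin 11))
    (hclosed : ∀ v ∈ P, v ≠ x → ∀ w : V, G.Adj v w → w ∈ P)
    (C : Set V) (hC : G.IdentifyingCode C) (hcard : (C ∩ P).ncard = 4) :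
    ∀ v ∈ insert x (G.neighborSet x) ∩ C, v ∉ P :=
  identifyingCode_inter_P11_eq_four_x_dominated_outside_general G P x hx φ hφx hclosed C hC hcard
end
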